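/- arXiv:2208.01728 — 9 statements merged into one kernel-verified Lean document; each statement's English description precedes it below -/
import Mathlib

section
/- Let b and c be real numbers. (i) If 0 < c < b, then there exist constants 0 < k₁ ≤ k₂, depending only on b and c, such that for every a > 0: k₁·min(a^b, a^c) ≤ ∫₀¹ min((aε)^b, 1)·ε^{−1−c} dε ≤ k₂·min(a^b, a^c). (ii) If 0 < b ≤ c, then ∫₀¹ min((aε)^b, 1)·ε^{−1−c} dε = ∞ for every a > 0. -/
/-!
Below the scale `ε = 1/a` the truncation is inactive and the integrand is `a^b ε^{b-1-c}`, whose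
integral near `0` is `(aδ)^b δ^{-c}/(b-c)` when `b > c` and diverges when `b ≤ c`. Above that
scale the integrand is `ε^{-1-c}`, contributing `(a^c - 1)/c`. For `a ≤ 1` only the first regime
occurs, giving `a^b/(b-c)`; for `a > 1` the two pieces add up to between `a^c/(b-c)` and
`a^c (1/(b-c) + 1/c)`.
-/

open MeasureTheory Set

lemma lintegral_rpow_Ioc_zero {p δ : ℝ} (hp : -1 < p) (hδ : 0 ≤ δ) :
    ∫⁻ x in Ioc (0 : ℝ) δ, ENNReal.ofReal (x ^ p) =
      ENNReal.ofReal (δ ^ (p + 1) / (p + 1)) := by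
  have hint : IntegrableOn (fun x : ℝ => x ^ p) (Ioc 0 δ) := by
    rw [← intervalIntegrable_iff_integrableOn_Ioc_of_le hδ]
    exact intervalIntegral.intervalIntegrable_rpow' hp
  rw [← ofReal_integral_eq_lintegral_ofReal hint]
  · rw [← intervalIntegral.integral_of_le hδ, integral_rpow (Or.inl hp),
      Real.zero_rpow (by linarith), sub_zero]
  · filter_upwards [ae_restrict_mem measurableSet_Ioc] with x hx
    exact Real.rpow_nonneg hx.1.le p

lemma lintegral_rpow_Ioc {p t s : ℝ} (hp : p ≠ -1) (ht : 0 < t) (hts : t ≤ s) :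
    ∫⁻ x in Ioc t s, ENNReal.ofReal (x ^ p) =
      ENNReal.ofReal ((s ^ (p + 1) - t ^ (p + 1)) / (p + 1)) := by
  have h0 : (0 : ℝ) ∉ uIcc t s := by
    rw [uIcc_of_le hts]
    exact fun h => absurd h.1 (not_le.2 ht)
  have hint : IntegrableOn (fun x : ℝ => x ^ p) (Ioc t s) := by
    rw [← intervalIntegrable_iff_integrableOn_Ioc_of_le hts]
    exact intervalIntegral.intervalIntegrable_rpow (Or.inr h0)
  rw [← ofReal_integral_eq_lintegral_ofReal hint]
  · rw [← intervalIntegral.integral_of_le hts, integral_rpow (Or.inr ⟨hp, h0⟩)]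
  · filter_upwards [ae_restrict_mem measurableSet_Ioc] with x hx
    exact Real.rpow_nonneg (ht.trans hx.1).le p

lemma lintegral_rpow_Ioc_zero_eq_top {p δ : ℝ} (hp : p ≤ -1) (hδ : 0 < δ) :
    ∫⁻ x in Ioc (0 : ℝ) δ, ENNReal.ofReal (x ^ p) = ⊤ := by
  by_contra h
  have hnonneg : 0 ≤ᶠ[ae (volume.restrict (Ioc (0 : ℝ) δ))] fun x : ℝ => x ^ p := by
    filter_upwards [ae_restrict_mem measurableSet_Ioc] with x hx
    exact Real.rpow_nonneg hx.1.le p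
  have hint : IntegrableOn (fun x : ℝ => x ^ p) (Ioc 0 δ) :=
    (lintegral_ofReal_ne_top_iff_integrable (by fun_prop) hnonneg).1 h
  have := (intervalIntegral.integrableOn_Ioo_rpow_iff hδ).1 (hint.mono_set Ioo_subset_Ioc_self)
  linarith

section TruncatedPower

variable {a b c : ℝ}

lemma setLIntegral_min_rpow_mul_of_mul_le_one (ha : 0 ≤ a) (hb : 0 ≤ b) {δ : ℝ}
    (haδ : a * δ ≤ 1) :
    ∫⁻ ε in Ioc (0 : ℝ) δ, ENNReal.ofReal (min ((a * ε) ^ b) 1 * ε ^ (-1 - c)) =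
      ENNReal.ofReal (a ^ b) * ∫⁻ ε in Ioc (0 : ℝ) δ, ENNReal.ofReal (ε ^ (b - 1 - c)) := by
  rw [← lintegral_const_mul' _ _ ENNReal.ofReal_ne_top]
  refine setLIntegral_congr_fun measurableSet_Ioc fun ε ⟨hε0, hεδ⟩ => ?_
  have haε : a * ε ≤ 1 := (mul_le_mul_of_nonneg_left hεδ ha).trans haδ
  rw [min_eq_left (Real.rpow_le_one (by positivity) haε hb), Real.mul_rpow ha hε0.le,
    mul_assoc, ← Real.rpow_add hε0, ENNReal.ofReal_mul (by positivity)]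
  ring_nf

lemma setLIntegral_min_rpow_mul_of_one_le_mul (ha : 0 ≤ a) (hb : 0 ≤ b) {t s : ℝ}
    (hat : 1 ≤ a * t) :
    ∫⁻ ε in Ioc t s, ENNReal.ofReal (min ((a * ε) ^ b) 1 * ε ^ (-1 - c)) =
      ∫⁻ ε in Ioc t s, ENNReal.ofReal (ε ^ (-1 - c)) := by
  refine setLIntegral_congr_fun measurableSet_Ioc fun ε hε => ?_
  have haε : 1 ≤ a * ε := hat.trans (mul_le_mul_of_nonneg_left hε.1.le ha)
  rw [min_eq_right (Real.one_le_rpow haε hb), one_mul]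

lemma lintegral_min_rpow_mul_of_le_one (ha : 0 < a) (ha1 : a ≤ 1) (hcb : c < b) (hb : 0 ≤ b) :
    ∫⁻ ε in Ioc (0 : ℝ) 1, ENNReal.ofReal (min ((a * ε) ^ b) 1 * ε ^ (-1 - c)) =
      ENNReal.ofReal (a ^ b / (b - c)) := by
  rw [setLIntegral_min_rpow_mul_of_mul_le_one ha.le hb (by simpa using ha1),
    lintegral_rpow_Ioc_zero (by linarith) zero_le_one, Real.one_rpow,
    ← ENNReal.ofReal_mul (by positivity)]
  ring_nf

lemma lintegral_min_rpow_mul_of_one_lt (ha1 : 1 < a) (hc : 0 < c) (hcb : c < b) :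
    ∫⁻ ε in Ioc (0 : ℝ) 1, ENNReal.ofReal (min ((a * ε) ^ b) 1 * ε ^ (-1 - c)) =
      ENNReal.ofReal (a ^ c / (b - c)) + ENNReal.ofReal ((a ^ c - 1) / c) := by
  have ha : 0 < a := zero_lt_one.trans ha1
  have hb : 0 ≤ b := (hc.trans hcb).le
  have hinv_pow (q : ℝ) : a⁻¹ ^ q = a ^ (-q) := by
    rw [Real.inv_rpow ha.le, Real.rpow_neg ha.le]
  have hinv1 : a⁻¹ ≤ 1 := inv_le_one_of_one_le₀ ha1.le
  rw [← Ioc_union_Ioc_eq_Ioc (inv_pos.2 ha).le hinv1,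
    lintegral_union measurableSet_Ioc (Ioc_disjoint_Ioc_of_le le_rfl),
    setLIntegral_min_rpow_mul_of_mul_le_one ha.le hb (mul_inv_cancel₀ ha.ne').le,
    lintegral_rpow_Ioc_zero (by linarith) (inv_pos.2 ha).le,
    setLIntegral_min_rpow_mul_of_one_le_mul ha.le hb (mul_inv_cancel₀ ha.ne').ge,
    lintegral_rpow_Ioc (by linarith) (inv_pos.2 ha) hinv1,
    ← ENNReal.ofReal_mul (by positivity)]
  congr 2
  · rw [hinv_pow, mul_div_assoc', ← Real.rpow_add ha]
    ring_nf
  · rw [hinv_pow, Real.one_rpow, show -1 - c + 1 = -c by ring, neg_neg, div_neg, ← neg_div]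
    ring_nf

lemma lintegral_min_rpow_mul_eq_top (ha : 0 < a) (hb : 0 ≤ b) (hbc : b ≤ c) :
    ∫⁻ ε in Ioc (0 : ℝ) 1, ENNReal.ofReal (min ((a * ε) ^ b) 1 * ε ^ (-1 - c)) = ⊤ := by
  set δ := min 1 a⁻¹
  have hδ : 0 < δ := lt_min one_pos (inv_pos.2 ha)
  have haδ : a * δ ≤ 1 :=
    (mul_le_mul_of_nonneg_left (min_le_right _ _) ha.le).trans (mul_inv_cancel₀ ha.ne').le
  refine eq_top_iff.2 (le_trans ?_ (lintegral_mono_set (Ioc_subset_Ioc le_rfl (min_le_left 1 a⁻¹))))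
  rw [setLIntegral_min_rpow_mul_of_mul_le_one ha.le hb haδ,
    lintegral_rpow_Ioc_zero_eq_top (by linarith) hδ, ENNReal.mul_top (ENNReal.ofReal_pos.2 (by positivity)).ne']

end TruncatedPower

/-- Lemma A.1: for `0 < c < b`, `∫₀¹ min((aε)^b, 1) ε^{-1-c} dε ≍ min(a^b, a^c)`
uniformly in `a > 0`; and the integral is infinite when `0 < b ≤ c`. -/
theorem stmt_0 (b c : ℝ) :
    ((0 < c ∧ c < b) →
      ∃ k₁ k₂ : ℝ, 0 < k₁ ∧ k₁ ≤ k₂ ∧ ∀ a : ℝ, 0 < a →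
        ENNReal.ofReal (k₁ * min (a ^ b) (a ^ c)) ≤
            (∫⁻ ε in Ioc (0 : ℝ) 1,
              ENNReal.ofReal (min ((a * ε) ^ b) 1 * ε ^ (-1 - c))) ∧
          (∫⁻ ε in Ioc (0 : ℝ) 1,
              ENNReal.ofReal (min ((a * ε) ^ b) 1 * ε ^ (-1 - c))) ≤
            ENNReal.ofReal (k₂ * min (a ^ b) (a ^ c))) ∧
    ((0 < b ∧ b ≤ c) → ∀ a : ℝ, 0 < a →
      (∫⁻ ε in Ioc (0 : ℝ) 1,
        ENNReal.ofReal (min ((a * ε) ^ b) 1 * ε ^ (-1 - c))) = ⊤) := by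
  refine ⟨fun ⟨hc, hcb⟩ => ?_, fun ⟨hb, hbc⟩ a ha => lintegral_min_rpow_mul_eq_top ha hb.le hbc⟩
  have hbc : 0 < b - c := sub_pos.2 hcb
  refine ⟨1 / (b - c), 1 / (b - c) + 1 / c, by positivity,
    le_add_of_nonneg_right (by positivity), fun a ha => ?_⟩
  rcases le_or_gt a 1 with ha1 | ha1
  · rw [lintegral_min_rpow_mul_of_le_one ha ha1 hcb (hc.trans hcb).le,
      min_eq_left (Real.rpow_le_rpow_of_exponent_ge ha ha1 hcb.le)]
    have : 0 ≤ a ^ b / c := by positivity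
    refine ⟨by rw [one_div_mul_eq_div], ENNReal.ofReal_le_ofReal ?_⟩
    rw [add_mul, one_div_mul_eq_div, one_div_mul_eq_div]
    linarith
  · have hac : 1 ≤ a ^ c := Real.one_le_rpow ha1.le hc.le
    rw [lintegral_min_rpow_mul_of_one_lt ha1 hc hcb,
      min_eq_right (Real.rpow_le_rpow_of_exponent_le ha1.le hcb.le),
      ← ENNReal.ofReal_add (by positivity) (div_nonneg (by linarith) hc.le)]
    refine ⟨ENNReal.ofReal_le_ofReal ?_, ENNReal.ofReal_le_ofReal ?_⟩
    · rw [one_div_mul_eq_div]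
      exact le_add_of_nonneg_right (div_nonneg (by linarith) hc.le)
    · rw [add_mul, one_div_mul_eq_div, one_div_mul_eq_div]
      gcongr
      linarith
end

section
/- Fix real numbers T > 0 and a ∈ (0,1). There exist constants 0 < k₁ ≤ k₂, depending only on T and a, such that for every b ≥ 0: k₁·(1+b)^{a−1} ≤ ∫₀ᵀ s^{−a}·exp(−2sb) ds ≤ k₂·(1+b)^{a−1}. -/
/-!
Write `c = 1 + b`. The substitution `s ↦ c s` gives
`∫₀ᵀ s^{-a} e^{-2cs} ds = c^{a-1} ∫₀^{cT} t^{-a} e^{-2t} dt`, and since `1 ≤ c` the last integral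
lies between its value at `cT = T` and `Γ(1 - a)` (using `e^{-2t} ≤ e^{-t}`). Passing from `c` back
to `b` in the exponent only increases the integrand, and by at most the factor `e^{2T}` on `(0, T]`.
-/

open MeasureTheory Set
open scoped ENNReal

theorem setLIntegral_Ioc_comp_const_mul {f : ℝ → ℝ≥0∞} (hf : Measurable f) {c : ℝ} (hc : 0 < c)
    (x y : ℝ) :
    ∫⁻ s in Ioc x y, f (c * s) = ENNReal.ofReal c⁻¹ * ∫⁻ t in Ioc (c * x) (c * y), f t := by
  have hmap := setLIntegral_map (μ := volume) (measurableSet_Ioc (a := c * x) (b := c * y)) hf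
    (measurable_const_mul c)
  rw [Real.map_volume_mul_left hc.ne', Measure.restrict_smul, lintegral_smul_measure,
    preimage_const_mul_Ioc₀ _ _ hc, mul_div_cancel_left₀ _ hc.ne',
    mul_div_cancel_left₀ _ hc.ne', abs_of_pos (inv_pos.2 hc)] at hmap
  exact hmap.symm

noncomputable def truncLaplaceRpow (a T b : ℝ) : ℝ≥0∞ :=
  ∫⁻ s in Ioc 0 T, ENNReal.ofReal (s ^ (-a) * Real.exp (-2 * s * b))

section truncLaplaceRpow

variable {a T b : ℝ}

theorem truncLaplaceRpow_eq_rpow_mul {c : ℝ} (hc : 0 < c) :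
    truncLaplaceRpow a T c = ENNReal.ofReal (c ^ (a - 1)) * truncLaplaceRpow a (c * T) 1 := by
  have hscale := setLIntegral_Ioc_comp_const_mul
    (f := fun t ↦ ENNReal.ofReal (t ^ (-a) * Real.exp (-2 * t * 1))) (by fun_prop) hc 0 T
  rw [mul_zero] at hscale
  rw [truncLaplaceRpow, truncLaplaceRpow, Real.rpow_sub_one hc.ne', div_eq_mul_inv,
    ENNReal.ofReal_mul (by positivity), mul_assoc, ← hscale,
    ← lintegral_const_mul' _ _ ENNReal.ofReal_ne_top]
  refine setLIntegral_congr_fun measurableSet_Ioc fun s hs ↦ ?_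
  rw [← ENNReal.ofReal_mul (by positivity), Real.mul_rpow hc.le hs.1.le, Real.rpow_neg hc.le]
  congr 1
  field_simp

theorem truncLaplaceRpow_mono_upper {T' : ℝ} (h : T ≤ T') :
    truncLaplaceRpow a T b ≤ truncLaplaceRpow a T' b :=
  lintegral_mono_set (Ioc_subset_Ioc_right h)

theorem truncLaplaceRpow_anti_param {b' : ℝ} (h : b ≤ b') :
    truncLaplaceRpow a T b' ≤ truncLaplaceRpow a T b :=
  setLIntegral_mono' measurableSet_Ioc fun s hs ↦ ENNReal.ofReal_le_ofReal <|
    mul_le_mul_of_nonneg_left (Real.exp_le_exp.2 (by nlinarith [hs.1]))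
      (Real.rpow_nonneg hs.1.le _)

theorem truncLaplaceRpow_le_exp_mul_add {δ : ℝ} (hδ : 0 ≤ δ) :
    truncLaplaceRpow a T b ≤
      ENNReal.ofReal (Real.exp (2 * δ * T)) * truncLaplaceRpow a T (b + δ) := by
  rw [truncLaplaceRpow, truncLaplaceRpow, ← lintegral_const_mul' _ _ ENNReal.ofReal_ne_top]
  refine setLIntegral_mono' measurableSet_Ioc fun s hs ↦ ?_
  rw [← ENNReal.ofReal_mul (Real.exp_pos _).le, mul_left_comm, ← Real.exp_add]
  exact ENNReal.ofReal_le_ofReal <| mul_le_mul_of_nonneg_left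
    (Real.exp_le_exp.2 (by nlinarith [hs.1, hs.2])) (Real.rpow_nonneg hs.1.le _)

theorem truncLaplaceRpow_pos (hT : 0 < T) : 0 < truncLaplaceRpow a T b := by
  have hsupp : Ioc 0 T ⊆
      Function.support fun s ↦ ENNReal.ofReal (s ^ (-a) * Real.exp (-2 * s * b)) :=
    fun s hs ↦ (ENNReal.ofReal_pos.2 (mul_pos (Real.rpow_pos_of_pos hs.1 _) (Real.exp_pos _))).ne'
  rw [truncLaplaceRpow, setLIntegral_pos_iff (by fun_prop), inter_eq_right.2 hsupp,
    Real.volume_Ioc, sub_zero]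
  exact ENNReal.ofReal_pos.2 hT

theorem truncLaplaceRpow_one_le_ofReal_Gamma (ha : a < 1) :
    truncLaplaceRpow a T 1 ≤ ENNReal.ofReal (Real.Gamma (1 - a)) := by
  rw [Real.Gamma_eq_integral (by linarith), ofReal_integral_eq_lintegral_ofReal
    (Real.GammaIntegral_convergent (by linarith))]
  · refine (lintegral_mono_set Ioc_subset_Ioi_self).trans
      (setLIntegral_mono' measurableSet_Ioi fun s hs ↦ ENNReal.ofReal_le_ofReal ?_)
    rw [mul_comm, sub_sub_cancel_left]
    exact mul_le_mul_of_nonneg_right (Real.exp_le_exp.2 (by linarith [hs.out]))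
      (Real.rpow_nonneg hs.out.le _)
  · filter_upwards [ae_restrict_mem measurableSet_Ioi] with s hs
    exact mul_nonneg (Real.exp_pos _).le (Real.rpow_nonneg hs.out.le _)

end truncLaplaceRpow

/-- Lemma A.2: for fixed `T > 0` and `a ∈ (0,1)`,
`∫₀ᵀ s^{-a} exp(-2sb) ds ≍ (1+b)^{a-1}` uniformly in `b ≥ 0`. -/
theorem stmt_1 (T a : ℝ) (hT : 0 < T) (ha : a ∈ Ioo (0 : ℝ) 1) :
    ∃ k₁ k₂ : ℝ, 0 < k₁ ∧ k₁ ≤ k₂ ∧ ∀ b : ℝ, 0 ≤ b →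
      ENNReal.ofReal (k₁ * (1 + b) ^ (a - 1)) ≤
          (∫⁻ s in Ioc (0 : ℝ) T,
            ENNReal.ofReal (s ^ (-a) * Real.exp (-2 * s * b))) ∧
        (∫⁻ s in Ioc (0 : ℝ) T,
            ENNReal.ofReal (s ^ (-a) * Real.exp (-2 * s * b))) ≤
          ENNReal.ofReal (k₂ * (1 + b) ^ (a - 1)) := by
  have hGamma (x : ℝ) := truncLaplaceRpow_one_le_ofReal_Gamma (T := x) ha.2
  have hGamma_nonneg : 0 ≤ Real.Gamma (1 - a) := Real.Gamma_nonneg_of_nonneg (by linarith [ha.2])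
  have hfinite : truncLaplaceRpow a T 1 ≠ ∞ := ne_top_of_le_ne_top ENNReal.ofReal_ne_top (hGamma T)
  refine ⟨(truncLaplaceRpow a T 1).toReal, Real.exp (2 * T) * Real.Gamma (1 - a),
    ENNReal.toReal_pos (truncLaplaceRpow_pos hT).ne' hfinite, ?_, fun b hb ↦ ⟨?_, ?_⟩⟩
  · exact (ENNReal.toReal_le_of_le_ofReal hGamma_nonneg (hGamma T)).trans
      (le_mul_of_one_le_left hGamma_nonneg (Real.one_le_exp (by linarith)))
  all_goals have hc : 0 < 1 + b := by linarith
  · calc ENNReal.ofReal ((truncLaplaceRpow a T 1).toReal * (1 + b) ^ (a - 1))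
        = ENNReal.ofReal ((1 + b) ^ (a - 1)) * truncLaplaceRpow a T 1 := by
          rw [ENNReal.ofReal_mul ENNReal.toReal_nonneg, ENNReal.ofReal_toReal hfinite, mul_comm]
      _ ≤ ENNReal.ofReal ((1 + b) ^ (a - 1)) * truncLaplaceRpow a ((1 + b) * T) 1 := by
          gcongr
          exact truncLaplaceRpow_mono_upper (le_mul_of_one_le_left hT.le (by linarith))
      _ = truncLaplaceRpow a T (1 + b) := (truncLaplaceRpow_eq_rpow_mul hc).symm
      _ ≤ truncLaplaceRpow a T b := truncLaplaceRpow_anti_param (by linarith)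
  · calc truncLaplaceRpow a T b
        ≤ ENNReal.ofReal (Real.exp (2 * 1 * T)) * truncLaplaceRpow a T (b + 1) :=
          truncLaplaceRpow_le_exp_mul_add zero_le_one
      _ = ENNReal.ofReal (Real.exp (2 * T)) *
            (ENNReal.ofReal ((1 + b) ^ (a - 1)) * truncLaplaceRpow a ((1 + b) * T) 1) := by
          rw [add_comm, truncLaplaceRpow_eq_rpow_mul hc, mul_one]
      _ ≤ ENNReal.ofReal (Real.exp (2 * T)) *
            (ENNReal.ofReal ((1 + b) ^ (a - 1)) * ENNReal.ofReal (Real.Gamma (1 - a))) := by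
          gcongr
          exact hGamma _
      _ = ENNReal.ofReal (Real.exp (2 * T) * Real.Gamma (1 - a) * (1 + b) ^ (a - 1)) := by
          rw [← ENNReal.ofReal_mul (by positivity), ← ENNReal.ofReal_mul (Real.exp_pos _).le]
          ring_nf
end

section
/- Let d ≥ 1, let μ be a Borel measure on ℝ^d, let R : ℝ^d → [0,∞) be measurable, and fix b ∈ (0,1). Then there exist constants 0 < c₁ ≤ c₂, depending only on b, such that c₁·∫_{ℝ^d} (1 + R(ξ))^{b−1} μ(dξ) ≤ ∫₀¹ s^{−b} ( ∫_{ℝ^d} exp(−2sR(ξ)) μ(dξ) ) ds ≤ c₂·∫_{ℝ^d} (1 + R(ξ))^{b−1} μ(dξ), where both sides may be infinite simultaneously. -/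
/-!
By Tonelli the middle term is `∫ φ(R ξ) dμ` with `φ(r) = ∫₀¹ s^{-b} e^{-2sr} ds`, and
`φ(r) ≍ (1 + r)^{b-1}`. For the lower bound restrict to `s ≤ (1 + r)⁻¹`, where
`e^{-2sr} ≥ e^{-2}` and `s^{-b} ≥ (1 + r)^b`. For the upper bound use
`e^{-2sr} ≤ e² e^{-2(1+r)s}` on `[0, 1]` and extend to `(0, ∞)`, which gives the Gamma
integral `Γ(1 - b) (2(1 + r))^{b-1}`.

Tonelli needs `μ` to be s-finite. This holds when `∫ e^{-2R} dμ < ∞`, the integrand being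
positive; otherwise both sides are infinite.
-/

open MeasureTheory Set Real

lemma sFinite_of_lintegral_ne_top {α : Type*} [MeasurableSpace α] {μ : Measure α}
    {f : α → ENNReal} (hf : Measurable f) (hf_ne_zero : ∀ x, f x ≠ 0)
    (hfin : ∫⁻ x, f x ∂μ ≠ ⊤) : SFinite μ :=
  have : IsFiniteMeasure (μ.withDensity f) := isFiniteMeasure_withDensity hfin
  sFinite_of_absolutelyContinuous
    (withDensity_absolutelyContinuous' hf.aemeasurable (ae_of_all _ hf_ne_zero))

lemma lintegral_Ioi_rpow_mul_exp_neg_mul {a c : ℝ} (ha : 0 < a) (hc : 0 < c) :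
    ∫⁻ t in Ioi 0, ENNReal.ofReal (t ^ (a - 1) * exp (-(c * t))) =
      ENNReal.ofReal ((1 / c) ^ a * Gamma a) := by
  have hint : IntegrableOn (fun t : ℝ ↦ t ^ (a - 1) * exp (-(c * t))) (Ioi 0) := by
    simpa [neg_mul] using
      integrableOn_rpow_mul_exp_neg_mul_rpow (p := 1) (by linarith : -1 < a - 1) one_pos hc
  rw [← integral_rpow_mul_exp_neg_mul_Ioi ha hc,
    ofReal_integral_eq_lintegral_ofReal hint]
  exact (ae_restrict_mem measurableSet_Ioi).mono fun t ht ↦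
    mul_nonneg (rpow_nonneg (le_of_lt ht) _) (exp_pos _).le

lemma exp_neg_two_mul_le_one_add_rpow {b r : ℝ} (hb : 0 ≤ b) (hr : 0 ≤ r) :
    exp (-2 * r) ≤ (1 + r) ^ (b - 1) :=
  calc exp (-2 * r) ≤ exp (-r) := exp_le_exp.2 (by linarith)
    _ = (exp r)⁻¹ := exp_neg r
    _ ≤ (1 + r)⁻¹ := inv_anti₀ (by linarith) (by linarith [add_one_le_exp r])
    _ = (1 + r) ^ (-1 : ℝ) := (rpow_neg_one _).symm
    _ ≤ (1 + r) ^ (b - 1) := rpow_le_rpow_of_exponent_le (by linarith) (by linarith)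

lemma ofReal_mul_le_lintegral_rpow_mul_exp {b r : ℝ} (hb : 0 ≤ b) (hr : 0 ≤ r) :
    ENNReal.ofReal (exp (-2)) * ENNReal.ofReal ((1 + r) ^ (b - 1)) ≤
      ∫⁻ s in Ioc (0 : ℝ) 1,
        ENNReal.ofReal (s ^ (-b)) * ENNReal.ofReal (exp (-2 * s * r)) := by
  set a := (1 + r)⁻¹ with ha
  have hr1 : 0 < 1 + r := by linarith
  have ha_rpow : a ^ (-b) = (1 + r) ^ b := by rw [ha, inv_rpow hr1.le, rpow_neg hr1.le, inv_inv]
  calc ENNReal.ofReal (exp (-2)) * ENNReal.ofReal ((1 + r) ^ (b - 1))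
      = ∫⁻ _ in Ioc (0 : ℝ) a, ENNReal.ofReal (a ^ (-b)) * ENNReal.ofReal (exp (-2)) := by
        rw [setLIntegral_const, Real.volume_Ioc, ← ENNReal.ofReal_mul (by positivity),
          ← ENNReal.ofReal_mul (by positivity), ← ENNReal.ofReal_mul (by positivity),
          ha_rpow, rpow_sub_one hr1.ne', sub_zero, ha]
        ring_nf
    _ ≤ ∫⁻ s in Ioc (0 : ℝ) a,
          ENNReal.ofReal (s ^ (-b)) * ENNReal.ofReal (exp (-2 * s * r)) :=
        setLIntegral_mono' measurableSet_Ioc fun s ⟨hs0, hsa⟩ ↦ by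
          have hsr : s * r ≤ 1 :=
            calc s * r ≤ a * (1 + r) := by nlinarith
              _ = 1 := inv_mul_cancel₀ hr1.ne'
          exact mul_le_mul'
            (ENNReal.ofReal_le_ofReal (rpow_le_rpow_of_nonpos hs0 hsa (neg_nonpos.2 hb)))
            (ENNReal.ofReal_le_ofReal (exp_le_exp.2 (by linarith)))
    _ ≤ _ := lintegral_mono_set (Ioc_subset_Ioc_right (inv_le_one_of_one_le₀ (by linarith)))

lemma lintegral_rpow_mul_exp_le {b r : ℝ} (hb : b < 1) (hr : 0 ≤ r) :
    ∫⁻ s in Ioc (0 : ℝ) 1, ENNReal.ofReal (s ^ (-b)) * ENNReal.ofReal (exp (-2 * s * r)) ≤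
      ENNReal.ofReal (exp 2 * Gamma (1 - b) * 2 ^ (b - 1)) *
        ENNReal.ofReal ((1 + r) ^ (b - 1)) := by
  have hr1 : 0 < 1 + r := by linarith
  have hc : 0 < 2 * (1 + r) := by positivity
  calc ∫⁻ s in Ioc (0 : ℝ) 1, ENNReal.ofReal (s ^ (-b)) * ENNReal.ofReal (exp (-2 * s * r))
      ≤ ∫⁻ s in Ioc (0 : ℝ) 1, ENNReal.ofReal (exp 2) *
          ENNReal.ofReal (s ^ ((1 - b) - 1) * exp (-(2 * (1 + r) * s))) :=
        setLIntegral_mono' measurableSet_Ioc fun s ⟨hs0, hs1⟩ ↦ by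
          rw [← ENNReal.ofReal_mul (exp_pos _).le, ← ENNReal.ofReal_mul (by positivity),
            sub_sub_cancel_left, mul_left_comm, ← exp_add]
          gcongr
          linarith
    _ ≤ ∫⁻ s in Ioi (0 : ℝ), ENNReal.ofReal (exp 2) *
          ENNReal.ofReal (s ^ ((1 - b) - 1) * exp (-(2 * (1 + r) * s))) :=
        lintegral_mono_set Ioc_subset_Ioi_self
    _ = ENNReal.ofReal (exp 2) *
          ENNReal.ofReal ((1 / (2 * (1 + r))) ^ (1 - b) * Gamma (1 - b)) := by
        rw [lintegral_const_mul' _ _ ENNReal.ofReal_ne_top,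
          lintegral_Ioi_rpow_mul_exp_neg_mul (sub_pos.2 hb) hc]
    _ = _ := by
        rw [← ENNReal.ofReal_mul (exp_pos _).le, ← ENNReal.ofReal_mul, one_div,
          inv_rpow hc.le, ← rpow_neg hc.le, neg_sub, mul_rpow zero_le_two hr1.le]
        · ring_nf
        · have := Gamma_pos_of_pos (sub_pos.2 hb); positivity

section

variable {α : Type*} [MeasurableSpace α] {μ : Measure α} {R : α → ℝ}

lemma lintegral_Ioc_rpow_mul_lintegral_exp_comm [SFinite μ] (hR : Measurable R) (b : ℝ) :
    ∫⁻ s in Ioc (0 : ℝ) 1, ENNReal.ofReal (s ^ (-b)) *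
        ∫⁻ ξ, ENNReal.ofReal (exp (-2 * s * R ξ)) ∂μ =
      ∫⁻ ξ, (∫⁻ s in Ioc (0 : ℝ) 1,
        ENNReal.ofReal (s ^ (-b)) * ENNReal.ofReal (exp (-2 * s * R ξ))) ∂μ := by
  simp_rw [← lintegral_const_mul' _ _ ENNReal.ofReal_ne_top]
  exact lintegral_lintegral_swap (by fun_prop)

lemma lintegral_Ioc_rpow_mul_lintegral_exp_eq_top (hR : ∀ ξ, 0 ≤ R ξ) (b : ℝ)
    (hE : ∫⁻ ξ, ENNReal.ofReal (exp (-2 * R ξ)) ∂μ = ⊤) :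
    ∫⁻ s in Ioc (0 : ℝ) 1, ENNReal.ofReal (s ^ (-b)) *
        ∫⁻ ξ, ENNReal.ofReal (exp (-2 * s * R ξ)) ∂μ = ⊤ := by
  refine eq_top_iff.2 (le_of_eq_of_le (by simp : ⊤ = ∫⁻ _ in Ioc (0 : ℝ) 1, ⊤)
    (setLIntegral_mono' measurableSet_Ioc fun s ⟨hs0, hs1⟩ ↦ ?_))
  have hE_le : ∫⁻ ξ, ENNReal.ofReal (exp (-2 * R ξ)) ∂μ ≤
      ∫⁻ ξ, ENNReal.ofReal (exp (-2 * s * R ξ)) ∂μ :=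
    lintegral_mono fun ξ ↦ ENNReal.ofReal_le_ofReal (exp_le_exp.2 (by nlinarith [hR ξ]))
  rw [← ENNReal.mul_top (ENNReal.ofReal_pos.2 (rpow_pos_of_pos hs0 (-b))).ne', ← hE]
  exact mul_le_mul' le_rfl hE_le

end

/-- `∫₀¹ s^{-b} ∫ e^{-2sR} dμ ds ≍ ∫ (1+R)^{b-1} dμ` with constants depending
only on `b ∈ (0,1)`. -/
theorem stmt_8 (b : ℝ) (hb : b ∈ Ioo (0 : ℝ) 1) :
    ∃ c₁ c₂ : ℝ, 0 < c₁ ∧ c₁ ≤ c₂ ∧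
      ∀ (d : ℕ), 1 ≤ d →
      ∀ (μ : Measure (EuclideanSpace ℝ (Fin d)))
        (R : EuclideanSpace ℝ (Fin d) → ℝ),
        Measurable R → (∀ ξ, 0 ≤ R ξ) →
        ENNReal.ofReal c₁ * (∫⁻ ξ, ENNReal.ofReal ((1 + R ξ) ^ (b - 1)) ∂μ) ≤
            (∫⁻ s in Ioc (0 : ℝ) 1, ENNReal.ofReal (s ^ (-b)) *
              ∫⁻ ξ, ENNReal.ofReal (Real.exp (-2 * s * R ξ)) ∂μ) ∧
          (∫⁻ s in Ioc (0 : ℝ) 1, ENNReal.ofReal (s ^ (-b)) *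
              ∫⁻ ξ, ENNReal.ofReal (Real.exp (-2 * s * R ξ)) ∂μ) ≤
            ENNReal.ofReal c₂ * (∫⁻ ξ, ENNReal.ofReal ((1 + R ξ) ^ (b - 1)) ∂μ) := by
  obtain ⟨hb0, hb1⟩ := hb
  set c₂ := exp 2 * Gamma (1 - b) * 2 ^ (b - 1)
  have hc₂ : 0 < c₂ := by have := Gamma_pos_of_pos (sub_pos.2 hb1); positivity
  -- the two pointwise bounds at `r = 0` compare the constants
  have hc : ENNReal.ofReal (exp (-2)) ≤ ENNReal.ofReal c₂ := by
    simpa using (ofReal_mul_le_lintegral_rpow_mul_exp hb0.le le_rfl).trans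
      (lintegral_rpow_mul_exp_le hb1 le_rfl)
  refine ⟨exp (-2), c₂, exp_pos _, (ENNReal.ofReal_le_ofReal_iff hc₂.le).1 hc, ?_⟩
  intro d _ μ R hR hR0
  by_cases hE : ∫⁻ ξ, ENNReal.ofReal (exp (-2 * R ξ)) ∂μ = ⊤
  · have hA : ∫⁻ ξ, ENNReal.ofReal ((1 + R ξ) ^ (b - 1)) ∂μ = ⊤ := top_unique <| hE ▸
      lintegral_mono fun ξ ↦
        ENNReal.ofReal_le_ofReal (exp_neg_two_mul_le_one_add_rpow hb0.le (hR0 ξ))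
    rw [lintegral_Ioc_rpow_mul_lintegral_exp_eq_top hR0 b hE, hA,
      ENNReal.mul_top (ENNReal.ofReal_pos.2 hc₂).ne']
    exact ⟨le_top, le_rfl⟩
  · have : SFinite μ := sFinite_of_lintegral_ne_top (by fun_prop)
      (fun ξ ↦ (ENNReal.ofReal_pos.2 (exp_pos _)).ne') hE
    rw [lintegral_Ioc_rpow_mul_lintegral_exp_comm hR,
      ← lintegral_const_mul' _ _ ENNReal.ofReal_ne_top,
      ← lintegral_const_mul' _ _ ENNReal.ofReal_ne_top]
    exact ⟨lintegral_mono fun ξ ↦ ofReal_mul_le_lintegral_rpow_mul_exp hb0.le (hR0 ξ),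
      lintegral_mono fun ξ ↦ lintegral_rpow_mul_exp_le hb1 (hR0 ξ)⟩
end

section
/- Let d ≥ 1, let ψ : ℝ^d → ℂ be measurable with Re ψ(ξ) ≥ 0 for all ξ, let μ be a Borel measure on ℝ^d, and fix T > 0 and a ∈ (0,2). Then there exists a constant C > 0, depending only on a and T, such that ∫₀¹ ε^{−1−a} ( sup_{r∈[0,ε]} ∫₀ᵀ ∫_{ℝ^d} | e^{−(s+r)ψ(ξ)} − e^{−sψ(ξ)} |² μ(dξ) ds ) dε ≤ C·∫_{ℝ^d} (1 + |ψ(ξ)|^{a})·(1 + Re ψ(ξ))^{−1} μ(dξ). -/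
open MeasureTheory Set

lemma aux_exp_sub_one {z : ℂ} (hz : 0 ≤ z.re) :
    ‖Complex.exp (-z) - 1‖ ≤ 2 * min 1 (‖z‖) := by
  rcases le_total (‖z‖) 1 with h | h
  · rw [min_eq_right h]
    have := Complex.norm_exp_sub_one_le (x := -z) (by simpa using h)
    simpa using this
  · rw [min_eq_left h]
    have h1 : ‖Complex.exp (-z)‖ ≤ 1 := by
      rw [Complex.norm_exp]
      exact Real.exp_le_one_iff.2 (by simpa using hz)
    calc ‖Complex.exp (-z) - 1‖
        ≤ ‖Complex.exp (-z)‖ + ‖(1:ℂ)‖ := by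
          exact norm_sub_le _ _
      _ ≤ 2 * 1 := by
          simp only [norm_one, mul_one]
          linarith

lemma aux_pointwise {z : ℂ} (hz : 0 ≤ z.re) {r s ε : ℝ} (hr0 : 0 ≤ r) (hrε : r ≤ ε) :
    ‖Complex.exp (-((s:ℂ)+(r:ℂ)) * z) - Complex.exp (-(s:ℂ) * z)‖ ^ 2
      ≤ Real.exp (-(2*z.re)*s) * (4 * min 1 (ε * ‖z‖) ^ 2) := by
  have hsplit : Complex.exp (-((s:ℂ)+(r:ℂ)) * z) - Complex.exp (-(s:ℂ) * z)
      = Complex.exp (-(s:ℂ)*z) * (Complex.exp (-(r:ℂ)*z) - 1) := by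
    have h : -((s:ℂ)+(r:ℂ)) * z = -(s:ℂ)*z + -(r:ℂ)*z := by ring
    rw [h, Complex.exp_add, mul_sub, mul_one]
  rw [hsplit, norm_mul]
  have habs1 : ‖Complex.exp (-(s:ℂ)*z)‖ = Real.exp (-(z.re * s)) := by
    rw [Complex.norm_exp]; congr 1
    simp [Complex.mul_re]
    ring
  have hq : ‖Complex.exp (-(r:ℂ)*z) - 1‖ ≤ 2 * min 1 (ε * ‖z‖) := by
    have h1 : ‖Complex.exp (-((r:ℂ)*z)) - 1‖ ≤ 2 * min 1 (‖(r:ℂ)*z‖) := by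
      refine aux_exp_sub_one ?_
      simp only [Complex.mul_re, Complex.ofReal_re, Complex.ofReal_im, zero_mul, sub_zero]
      positivity
    have h2 : ‖(r:ℂ)*z‖ = r * ‖z‖ := by
      rw [norm_mul, Complex.norm_real, Real.norm_eq_abs, abs_of_nonneg hr0]
    have h3 : min 1 (r * ‖z‖) ≤ min 1 (ε * ‖z‖) :=
      min_le_min le_rfl (by nlinarith [norm_nonneg z])
    rw [h2] at h1
    calc ‖Complex.exp (-(r:ℂ)*z) - 1‖
        = ‖Complex.exp (-((r:ℂ)*z)) - 1‖ := by rw [neg_mul]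
      _ ≤ 2 * min 1 (r * ‖z‖) := h1
      _ ≤ 2 * min 1 (ε * ‖z‖) := by linarith
  rw [habs1]
  calc (Real.exp (-(z.re*s)) * ‖Complex.exp (-(r:ℂ)*z) - 1‖)^2
      = Real.exp (-(2*z.re)*s) * ‖Complex.exp (-(r:ℂ)*z) - 1‖^2 := by
        rw [mul_pow]
        congr 1
        rw [← Real.exp_nat_mul]
        congr 1
        push_cast
        ring
    _ ≤ Real.exp (-(2*z.re)*s) * (4 * min 1 (ε * ‖z‖) ^ 2) := by
        refine mul_le_mul_of_nonneg_left ?_ (Real.exp_nonneg _)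
        have := pow_le_pow_left₀ (norm_nonneg _) hq 2
        calc ‖Complex.exp (-(r:ℂ)*z) - 1‖^2
            ≤ (2 * min 1 (ε * ‖z‖))^2 := this
          _ = 4 * min 1 (ε * ‖z‖) ^ 2 := by ring

lemma aux_sint {T : ℝ} (hT : 0 < T) {ρ : ℝ} (hρ : 0 ≤ ρ) :
    ∫⁻ s in Ioc (0:ℝ) T, ENNReal.ofReal (Real.exp (-(2*ρ)*s))
      ≤ ENNReal.ofReal ((2*T+1)/(1+ρ)) := by
  rcases le_total ρ 1 with h | h
  · calc ∫⁻ s in Ioc (0:ℝ) T, ENNReal.ofReal (Real.exp (-(2*ρ)*s))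
        ≤ ∫⁻ _ in Ioc (0:ℝ) T, 1 := by
          refine setLIntegral_mono measurable_const fun s hs => ?_
          simp only [ENNReal.ofReal_le_one]
          exact Real.exp_le_one_iff.2 (by nlinarith [hs.1])
      _ = ENNReal.ofReal T := by rw [setLIntegral_one, Real.volume_Ioc, sub_zero]
      _ ≤ ENNReal.ofReal ((2*T+1)/(1+ρ)) := by
          refine ENNReal.ofReal_le_ofReal ?_
          rw [le_div_iff₀ (by linarith)]
          nlinarith
  · have hb : (0:ℝ) < 2*ρ := by linarith
    have hcont : Continuous fun s : ℝ => Real.exp (-(2*ρ)*s) :=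
      (continuous_const.mul continuous_id).rexp
    have hint : IntegrableOn (fun s : ℝ => Real.exp (-(2*ρ)*s)) (Ioc 0 T) :=
      hcont.integrableOn_Ioc
    rw [← ofReal_integral_eq_lintegral_ofReal hint
        (ae_of_all _ fun s => Real.exp_nonneg _)]
    have hval : ∫ s in Ioc (0:ℝ) T, Real.exp (-(2*ρ)*s)
        = (1 - Real.exp (-(2*ρ)*T)) / (2*ρ) := by
      rw [← intervalIntegral.integral_of_le hT.le]
      rw [intervalIntegral.integral_comp_mul_left (fun u => Real.exp u) (by linarith : -(2*ρ) ≠ 0)]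
      rw [integral_exp]
      simp only [mul_zero, Real.exp_zero, smul_eq_mul]
      field_simp
      ring
    rw [hval]
    refine ENNReal.ofReal_le_ofReal ?_
    rw [div_le_div_iff₀ hb (by linarith)]
    nlinarith [Real.exp_nonneg (-(2*ρ)*T)]

lemma aux_eint {a : ℝ} (ha0 : 0 < a) (ha2 : a < 2) {x : ℝ} (hx : 0 ≤ x) :
    ∫⁻ ε in Ioc (0:ℝ) 1, ENNReal.ofReal (ε^(-1-a) * min 1 (ε*x)^2)
      ≤ ENNReal.ofReal ((1/(2-a) + 1/a) * (1 + x^a)) := by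
  rcases eq_or_lt_of_le hx with h0 | hx0
  · rw [← h0]
    have hz : ∀ ε : ℝ, ε^(-1-a) * min 1 (ε*0)^2 = 0 := fun ε => by simp
    simp only [hz, ENNReal.ofReal_zero, lintegral_const, zero_mul]
    exact zero_le
  set t := min 1 x⁻¹ with htdef
  have ht0 : 0 < t := lt_min one_pos (inv_pos.2 hx0)
  have ht1 : t ≤ 1 := min_le_left _ _
  -- pointwise bounds for t
  have hb1 : t^(2-a) * x^2 ≤ 1 + x^a := by
    rcases le_total x 1 with hx1 | hx1
    · have : t = 1 := min_eq_left ((one_le_inv₀ hx0).2 hx1)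
      rw [this, Real.one_rpow, one_mul]
      have : x^2 ≤ 1 := pow_le_one₀ hx hx1
      nlinarith [Real.rpow_nonneg hx a]
    · have ht : t = x⁻¹ := min_eq_right (inv_le_one_of_one_le₀ hx1)
      have : t^(2-a) * x^2 = x^a := by
        rw [ht, Real.inv_rpow hx0.le, ← Real.rpow_neg hx0.le,
          ← Real.rpow_natCast x 2, ← Real.rpow_add hx0]
        norm_num
      rw [this]; linarith
  have hb2 : t^(-a) ≤ 1 + x^a := by
    rcases le_total x 1 with hx1 | hx1
    · have : t = 1 := min_eq_left ((one_le_inv₀ hx0).2 hx1)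
      rw [this, Real.one_rpow]
      nlinarith [Real.rpow_nonneg hx a]
    · have ht : t = x⁻¹ := min_eq_right (inv_le_one_of_one_le₀ hx1)
      have : t^(-a) = x^a := by
        rw [ht, Real.inv_rpow hx0.le, ← Real.rpow_neg hx0.le, neg_neg]
      rw [this]; linarith
  rw [← Ioc_union_Ioc_eq_Ioc ht0.le ht1,
    lintegral_union measurableSet_Ioc (Ioc_disjoint_Ioc_of_le le_rfl)]
  have e1 : ∫⁻ ε in Ioc (0:ℝ) t, ENNReal.ofReal (ε^(-1-a) * min 1 (ε*x)^2)
      = ENNReal.ofReal (t^(2-a)/(2-a) * x^2) := by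
    rw [setLIntegral_congr_fun measurableSet_Ioc
      ((fun ε hε => ?_) :
        EqOn (fun ε : ℝ => ENNReal.ofReal (ε^(-1-a) * min 1 (ε*x)^2))
          (fun ε : ℝ => ENNReal.ofReal (ε^(1-a) * x^2)) (Ioc (0:ℝ) t))]
    · have hint : IntegrableOn (fun ε : ℝ => ε^(1-a) * x^2) (Ioc 0 t) := by
        have h1 : IntervalIntegrable (fun ε : ℝ => ε^(1-a)) volume 0 t :=
          intervalIntegral.intervalIntegrable_rpow' (by linarith)
        have := (intervalIntegrable_iff.mp h1)
        rw [uIoc_of_le ht0.le] at this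
        exact this.mul_const _
      rw [← ofReal_integral_eq_lintegral_ofReal hint
        ((ae_restrict_iff' measurableSet_Ioc).2 (ae_of_all _ fun ε hε =>
          mul_nonneg (Real.rpow_nonneg hε.1.le _) (sq_nonneg x)))]
      congr 1
      rw [← intervalIntegral.integral_of_le ht0.le,
        intervalIntegral.integral_mul_const,
        integral_rpow (Or.inl (by linarith : (-1:ℝ) < 1-a))]
      rw [Real.zero_rpow (by norm_num; linarith : (1-a+1:ℝ) ≠ 0)]
      rw [show (1-a+1:ℝ) = 2-a by ring]
      ring
    · have hεx : ε * x ≤ 1 := by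
        have : ε ≤ x⁻¹ := le_trans hε.2 (min_le_right _ _)
        calc ε * x ≤ x⁻¹ * x := by nlinarith
          _ = 1 := inv_mul_cancel₀ hx0.ne'
      beta_reduce
      rw [min_eq_right hεx]
      congr 1
      rw [mul_pow, ← Real.rpow_natCast ε 2, ← mul_assoc, ← Real.rpow_add hε.1]
      have h2 : ((-1:ℝ) - a + ((2:ℕ):ℝ)) = 1 - a := by push_cast; ring
      rw [h2]
  have e2 : ∫⁻ ε in Ioc t 1, ENNReal.ofReal (ε^(-1-a) * min 1 (ε*x)^2)
      ≤ ENNReal.ofReal (t^(-a)/a) := by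
    have step1 : ∫⁻ ε in Ioc t 1, ENNReal.ofReal (ε^(-1-a) * min 1 (ε*x)^2)
        ≤ ∫⁻ ε in Ioc t 1, ENNReal.ofReal (ε^(-1-a)) := by
      refine setLIntegral_mono ((measurable_id.pow_const _).ennreal_ofReal) fun ε hε => ?_
      refine ENNReal.ofReal_le_ofReal ?_
      have hε0 : (0:ℝ) < ε := lt_trans ht0 hε.1
      have hm0 : (0:ℝ) ≤ min 1 (ε*x) := le_min zero_le_one (mul_nonneg hε0.le hx)
      have hm1 : min 1 (ε*x) ≤ 1 := min_le_left _ _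
      have : min 1 (ε*x)^2 ≤ 1 := pow_le_one₀ hm0 hm1
      nlinarith [Real.rpow_nonneg hε0.le (-1-a)]
    refine step1.trans ?_
    have hmem : (0:ℝ) ∉ Set.uIcc t 1 := by
      rw [Set.uIcc_of_le ht1]
      exact fun h => absurd h.1 (not_le.2 ht0)
    have hint : IntegrableOn (fun ε : ℝ => ε^(-1-a)) (Ioc t 1) := by
      have h1 : IntervalIntegrable (fun ε : ℝ => ε^(-1-a)) volume t 1 :=
        intervalIntegral.intervalIntegrable_rpow (Or.inr hmem)
      have := intervalIntegrable_iff.mp h1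
      rwa [uIoc_of_le ht1] at this
    rw [← ofReal_integral_eq_lintegral_ofReal hint
      ((ae_restrict_iff' measurableSet_Ioc).2 (ae_of_all _ fun ε hε =>
        Real.rpow_nonneg (lt_trans ht0 hε.1).le _))]
    refine ENNReal.ofReal_le_ofReal ?_
    rw [← intervalIntegral.integral_of_le ht1,
      integral_rpow (Or.inr ⟨by intro h; apply ha0.ne'; linarith [h], hmem⟩)]
    rw [show (-1-a+1:ℝ) = -a by ring, Real.one_rpow]
    rw [show (1 - t^(-a))/(-a) = (t^(-a) - 1)/a by rw [div_neg, ← neg_div, neg_sub]]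
    gcongr
    linarith
  have hxa : (0:ℝ) ≤ x^a := Real.rpow_nonneg hx a
  have hd1 : (0:ℝ) < 2-a := by linarith
  have s1 : ∫⁻ ε in Ioc (0:ℝ) t, ENNReal.ofReal (ε^(-1-a) * min 1 (ε*x)^2)
      ≤ ENNReal.ofReal ((1+x^a)/(2-a)) := by
    rw [e1]
    refine ENNReal.ofReal_le_ofReal ?_
    rw [div_mul_eq_mul_div]
    gcongr
  have s2 : ∫⁻ ε in Ioc t (1:ℝ), ENNReal.ofReal (ε^(-1-a) * min 1 (ε*x)^2)
      ≤ ENNReal.ofReal ((1+x^a)/a) :=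
    e2.trans (ENNReal.ofReal_le_ofReal (by gcongr))
  refine (add_le_add s1 s2).trans (le_of_eq ?_)
  rw [← ENNReal.ofReal_add (div_nonneg (by linarith) hd1.le)
    (div_nonneg (by linarith) ha0.le)]
  congr 1
  field_simp


/-- Upper bound showing `𝓘̲_H(T) ≥ ind_H` for the heat kernel `e^{-sψ}`:
the weighted integral of the sup of time-increment double integrals is bounded by
`C ∫ (1+|ψ|^a)(1+Re ψ)^{-1} dμ`, with `C` depending only on `a` and `T`. -/
theorem stmt_9 (a T : ℝ) (ha : a ∈ Ioo (0 : ℝ) 2) (hT : 0 < T) :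
    ∃ C : ℝ, 0 < C ∧
      ∀ (d : ℕ), 1 ≤ d →
      ∀ (ψ : EuclideanSpace ℝ (Fin d) → ℂ)
        (μ : Measure (EuclideanSpace ℝ (Fin d))),
        Measurable ψ → (∀ ξ, 0 ≤ (ψ ξ).re) →
        (∫⁻ ε in Ioc (0 : ℝ) 1, ENNReal.ofReal (ε ^ (-1 - a)) *
            ⨆ r ∈ Icc (0 : ℝ) ε,
              ∫⁻ s in Ioc (0 : ℝ) T,
                ∫⁻ ξ, ENNReal.ofReal
                  (‖Complex.exp (-((s : ℂ) + (r : ℂ)) * ψ ξ) -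
                    Complex.exp (-(s : ℂ) * ψ ξ)‖ ^ 2) ∂μ) ≤
          ENNReal.ofReal C *
            ∫⁻ ξ, ENNReal.ofReal
              ((1 + ‖ψ ξ‖ ^ a) / (1 + (ψ ξ).re)) ∂μ := by

  obtain ⟨ha0, ha2⟩ := ha
  have hd1 : (0:ℝ) < 2 - a := by linarith
  refine ⟨4*(2*T+1)*(1/(2-a)+1/a), by positivity, ?_⟩
  intro d hd ψ μ hψ hre
  set C : ℝ := 4*(2*T+1)*(1/(2-a)+1/a) with hCdef
  have hC : 0 < C := by positivity
  have hxm : Measurable fun ξ => ‖ψ ξ‖ := by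
    simpa using hψ.norm
  have hrm : Measurable fun ξ => (ψ ξ).re := Complex.measurable_re.comp hψ
  have hwm : Measurable fun ξ =>
      ENNReal.ofReal ((1 + ‖ψ ξ‖ ^ a) / (1 + (ψ ξ).re)) :=
    ((measurable_const.add (hxm.pow_const a)).div
      (measurable_const.add hrm)).ennreal_ofReal
  by_cases hfin : (∫⁻ ξ, ENNReal.ofReal
      ((1 + ‖ψ ξ‖ ^ a) / (1 + (ψ ξ).re)) ∂μ) = ⊤
  · rw [hfin, ENNReal.mul_top (by simpa [ENNReal.ofReal_eq_zero] using not_le.2 hC)]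
    exact le_top
  haveI : SigmaFinite μ := by
    refine ⟨⟨⟨fun n => {ξ | ((n:ENNReal)+1)⁻¹ ≤
        ENNReal.ofReal ((1 + ‖ψ ξ‖ ^ a) / (1 + (ψ ξ).re))},
      fun _ => trivial, fun n => ?_, ?_⟩⟩⟩
    · have hb := mul_meas_ge_le_lintegral₀ (μ := μ) hwm.aemeasurable (((n:ENNReal)+1)⁻¹)
      refine lt_top_iff_ne_top.2 fun hS => hfin (top_le_iff.1 ?_)
      calc (⊤:ENNReal) = ((n:ENNReal)+1)⁻¹ * μ {ξ | ((n:ENNReal)+1)⁻¹ ≤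
            ENNReal.ofReal ((1 + ‖ψ ξ‖ ^ a) / (1 + (ψ ξ).re))} := by
            rw [hS, ENNReal.mul_top (ENNReal.inv_ne_zero.2 (by simp))]
        _ ≤ _ := hb
    · refine eq_univ_of_forall fun ξ => ?_
      have hw : ENNReal.ofReal ((1 + ‖ψ ξ‖ ^ a) / (1 + (ψ ξ).re)) ≠ 0 := by
        simp only [ne_eq, ENNReal.ofReal_eq_zero, not_le]
        refine div_pos ?_ ?_
        · nlinarith [Real.rpow_nonneg (norm_nonneg (ψ ξ)) a]
        · nlinarith [hre ξ]
      obtain ⟨n, hn⟩ := ENNReal.exists_inv_nat_lt hw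
      exact mem_iUnion.2 ⟨n, le_trans (ENNReal.inv_le_inv.2 le_self_add) hn.le⟩
  -- key bound on the supremum
  have key : ∀ ε ∈ Ioc (0:ℝ) 1,
      (⨆ r ∈ Icc (0:ℝ) ε, ∫⁻ s in Ioc (0:ℝ) T,
          ∫⁻ ξ, ENNReal.ofReal
            (‖Complex.exp (-((s : ℂ) + (r : ℂ)) * ψ ξ) -
              Complex.exp (-(s : ℂ) * ψ ξ)‖ ^ 2) ∂μ)
      ≤ ∫⁻ ξ, ENNReal.ofReal
          (4*(2*T+1) * min 1 (ε * ‖ψ ξ‖)^2 / (1+(ψ ξ).re)) ∂μ := by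
    intro ε hε
    refine iSup₂_le fun r hr => ?_
    have step1 : ∫⁻ s in Ioc (0:ℝ) T,
        ∫⁻ ξ, ENNReal.ofReal
          (‖Complex.exp (-((s : ℂ) + (r : ℂ)) * ψ ξ) -
            Complex.exp (-(s : ℂ) * ψ ξ)‖ ^ 2) ∂μ
        ≤ ∫⁻ s in Ioc (0:ℝ) T, ∫⁻ ξ, ENNReal.ofReal
            (Real.exp (-(2*(ψ ξ).re)*s) * (4 * min 1 (ε * ‖ψ ξ‖)^2)) ∂μ :=
      lintegral_mono fun s => lintegral_mono fun ξ =>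
        ENNReal.ofReal_le_ofReal (aux_pointwise (hre ξ) hr.1 hr.2)
    refine step1.trans ?_
    have hmg : Measurable (Function.uncurry fun (s : ℝ) ξ =>
        ENNReal.ofReal (Real.exp (-(2*(ψ ξ).re)*s) *
          (4 * min 1 (ε * ‖ψ ξ‖)^2))) := by
      refine Measurable.ennreal_ofReal (Measurable.mul ?_ ?_)
      · exact ((((hrm.comp measurable_snd).const_mul 2).neg.mul measurable_fst)).exp
      · exact (measurable_const.min
          (measurable_const.mul (hxm.comp measurable_snd))).pow_const 2 |>.const_mul 4
    rw [lintegral_lintegral_swap hmg.aemeasurable]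
    refine lintegral_mono fun ξ => ?_
    have hc0 : (0:ℝ) ≤ 4 * min 1 (ε * ‖ψ ξ‖)^2 := by positivity
    calc ∫⁻ s in Ioc (0:ℝ) T, ENNReal.ofReal
          (Real.exp (-(2*(ψ ξ).re)*s) * (4 * min 1 (ε * ‖ψ ξ‖)^2))
        = ∫⁻ s in Ioc (0:ℝ) T,
            ENNReal.ofReal (4 * min 1 (ε * ‖ψ ξ‖)^2) *
            ENNReal.ofReal (Real.exp (-(2*(ψ ξ).re)*s)) := by
          refine lintegral_congr fun s => ?_
          rw [← ENNReal.ofReal_mul hc0, mul_comm]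
      _ = ENNReal.ofReal (4 * min 1 (ε * ‖ψ ξ‖)^2) *
            ∫⁻ s in Ioc (0:ℝ) T, ENNReal.ofReal (Real.exp (-(2*(ψ ξ).re)*s)) :=
          lintegral_const_mul' _ _ ENNReal.ofReal_ne_top
      _ ≤ ENNReal.ofReal (4 * min 1 (ε * ‖ψ ξ‖)^2) *
            ENNReal.ofReal ((2*T+1)/(1+(ψ ξ).re)) :=
          mul_le_mul_right (aux_sint hT (hre ξ)) _
      _ = ENNReal.ofReal
            (4*(2*T+1) * min 1 (ε * ‖ψ ξ‖)^2 / (1+(ψ ξ).re)) := by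
          rw [← ENNReal.ofReal_mul hc0]
          congr 1
          ring
  -- measurable for second swap
  have hmg2 : Measurable (Function.uncurry fun (ε : ℝ) ξ =>
      ENNReal.ofReal (ε ^ (-1-a)) * ENNReal.ofReal
        (4*(2*T+1) * min 1 (ε * ‖ψ ξ‖)^2 / (1+(ψ ξ).re))) := by
    refine Measurable.mul ((measurable_fst.pow_const _).ennreal_ofReal) ?_
    refine Measurable.ennreal_ofReal (Measurable.div ?_ ?_)
    · exact ((measurable_const.min
        (measurable_fst.mul (hxm.comp measurable_snd))).pow_const 2).const_mul _
    · exact measurable_const.add (hrm.comp measurable_snd)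
  calc ∫⁻ ε in Ioc (0 : ℝ) 1, ENNReal.ofReal (ε ^ (-1 - a)) *
          ⨆ r ∈ Icc (0 : ℝ) ε, ∫⁻ s in Ioc (0 : ℝ) T,
            ∫⁻ ξ, ENNReal.ofReal
              (‖Complex.exp (-((s : ℂ) + (r : ℂ)) * ψ ξ) -
                Complex.exp (-(s : ℂ) * ψ ξ)‖ ^ 2) ∂μ
      ≤ ∫⁻ ε in Ioc (0:ℝ) 1, ENNReal.ofReal (ε ^ (-1-a)) *
          ∫⁻ ξ, ENNReal.ofReal
            (4*(2*T+1) * min 1 (ε * ‖ψ ξ‖)^2 / (1+(ψ ξ).re)) ∂μ :=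
        setLIntegral_mono' measurableSet_Ioc fun ε hε =>
          mul_le_mul_right (key ε hε) _
    _ = ∫⁻ ε in Ioc (0:ℝ) 1, ∫⁻ ξ, ENNReal.ofReal (ε ^ (-1-a)) *
          ENNReal.ofReal
            (4*(2*T+1) * min 1 (ε * ‖ψ ξ‖)^2 / (1+(ψ ξ).re)) ∂μ :=
        lintegral_congr fun ε =>
          (lintegral_const_mul' _ _ ENNReal.ofReal_ne_top).symm
    _ = ∫⁻ ξ, (∫⁻ ε in Ioc (0:ℝ) 1, ENNReal.ofReal (ε ^ (-1-a)) *
          ENNReal.ofReal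
            (4*(2*T+1) * min 1 (ε * ‖ψ ξ‖)^2 / (1+(ψ ξ).re))) ∂μ :=
        lintegral_lintegral_swap hmg2.aemeasurable
    _ ≤ ∫⁻ ξ, ENNReal.ofReal C *
          ENNReal.ofReal ((1 + ‖ψ ξ‖ ^ a) / (1 + (ψ ξ).re)) ∂μ := by
        refine lintegral_mono fun ξ => ?_
        have hρ : (0:ℝ) < 1 + (ψ ξ).re := by nlinarith [hre ξ]
        have hK : (0:ℝ) ≤ 4*(2*T+1)/(1+(ψ ξ).re) := by positivity
        calc ∫⁻ ε in Ioc (0:ℝ) 1, ENNReal.ofReal (ε ^ (-1-a)) *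
              ENNReal.ofReal
                (4*(2*T+1) * min 1 (ε * ‖ψ ξ‖)^2 / (1+(ψ ξ).re))
            = ∫⁻ ε in Ioc (0:ℝ) 1, ENNReal.ofReal (4*(2*T+1)/(1+(ψ ξ).re)) *
              ENNReal.ofReal (ε ^ (-1-a) * min 1 (ε * ‖ψ ξ‖)^2) := by
              refine setLIntegral_congr_fun measurableSet_Ioc
                (fun ε hε => ?_)
              rw [← ENNReal.ofReal_mul hK,
                ← ENNReal.ofReal_mul (Real.rpow_nonneg hε.1.le _)]
              congr 1
              ring
          _ = ENNReal.ofReal (4*(2*T+1)/(1+(ψ ξ).re)) *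
              ∫⁻ ε in Ioc (0:ℝ) 1,
                ENNReal.ofReal (ε ^ (-1-a) * min 1 (ε * ‖ψ ξ‖)^2) :=
              lintegral_const_mul' _ _ ENNReal.ofReal_ne_top
          _ ≤ ENNReal.ofReal (4*(2*T+1)/(1+(ψ ξ).re)) *
              ENNReal.ofReal ((1/(2-a)+1/a) * (1 + ‖ψ ξ‖ ^ a)) :=
              mul_le_mul_right (aux_eint ha0 ha2 (norm_nonneg _)) _
          _ = ENNReal.ofReal C *
              ENNReal.ofReal ((1 + ‖ψ ξ‖ ^ a) / (1 + (ψ ξ).re)) := by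
              rw [← ENNReal.ofReal_mul hK, ← ENNReal.ofReal_mul hC.le]
              congr 1
              rw [hCdef]
              ring
    _ = ENNReal.ofReal C *
          ∫⁻ ξ, ENNReal.ofReal ((1 + ‖ψ ξ‖ ^ a) / (1 + (ψ ξ).re)) ∂μ :=
        lintegral_const_mul' _ _ ENNReal.ofReal_ne_top
end

section
/- Let d ≥ 1, let ψ : ℝ^d → ℂ be measurable with Re ψ(ξ) ≥ 0 for all ξ, let μ be a Borel measure on ℝ^d, and fix t > 0 and a ∈ (0,1). Then there exists a constant c > 0, depending only on a, t, and d, such that ∫₀¹ ε^{−1−a} ( ∫₀ᵗ ∫_{ℝ^d} | e^{−(s+ε)ψ(ξ)} − e^{−sψ(ξ)} |² μ(dξ) ds ) dε ≥ c·∫_{{ξ : |ψ(ξ)| ≥ 2}} |ψ(ξ)|^{a}·(1 + Re ψ(ξ))^{−1} μ(dξ). -/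
open MeasureTheory Set
open scoped ENNReal


lemma sin_sq_lb {v : ℝ} (hv0 : 0 < v) (hv1 : v ≤ 1) : (9:ℝ)/16 * v^2 ≤ Real.sin v ^ 2 := by
  have h3 := Real.sin_gt_sub_cube hv0
  have hv2 : v^2 ≤ v := by nlinarith
  have hv3 : v^3 ≤ v^2 := by nlinarith
  have hsv : (3:ℝ)/4 * v ≤ Real.sin v := by linarith
  have h := mul_self_le_mul_self (by positivity : (0:ℝ) ≤ 3/4*v) hsv
  nlinarith [h]

set_option maxHeartbeats 1000000 in
/-- core oscillation bound for the complex exponential -/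
lemma kappa81 (w : ℂ) (h0 : 0 ≤ w.re) (h1 : 1/4 ≤ ‖w‖) (h2 : ‖w‖ ≤ 1) :
    (1:ℝ)/81 ≤ ‖Complex.exp (-w) - 1‖ ^ 2 := by
  obtain ⟨x, y⟩ := w
  simp only [Complex.add_re, Complex.add_im] at *
  have hx0 : 0 ≤ x := h0
  have hsq : ‖Complex.exp (-⟨x, y⟩) - 1‖ ^ 2
      = (Real.exp (-x) * Real.cos y - 1)^2 + (Real.exp (-x) * Real.sin y)^2 := by
    rw [Complex.sq_norm, Complex.normSq_apply]
    simp [Complex.exp_re, Complex.exp_im, Real.cos_neg, Real.sin_neg]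
    ring
  have habs : x^2 + y^2 = ‖(⟨x, y⟩ : ℂ)‖^2 := by
    rw [Complex.sq_norm, Complex.normSq_apply]; simp; ring
  have h116 : (1:ℝ)/16 ≤ x^2 + y^2 := by
    rw [habs]; nlinarith [norm_nonneg (⟨x,y⟩ : ℂ)]
  have hle1 : x^2 + y^2 ≤ 1 := by rw [habs]; nlinarith [norm_nonneg (⟨x,y⟩ : ℂ)]
  have hypos : y^2 ≤ 1 := by nlinarith [sq_nonneg x]
  rw [hsq]
  have hEpos : 0 < Real.exp (-x) := Real.exp_pos _
  rcases le_or_gt (1/8 : ℝ) x with hx | hx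
  · have h98 : (9:ℝ)/8 ≤ Real.exp x := by nlinarith [Real.add_one_le_exp x]
    have hprod : Real.exp (-x) * Real.exp x = 1 := by
      rw [← Real.exp_add]; simp
    have hE : Real.exp (-x) ≤ 8/9 := by nlinarith [Real.exp_pos x]
    have hcos : Real.exp (-x) * Real.cos y ≤ 8/9 := by
      nlinarith [Real.cos_le_one y, Real.neg_one_le_cos y]
    nlinarith [sq_nonneg (Real.exp (-x) * Real.sin y),
      sq_nonneg (Real.exp (-x) * Real.cos y - 1 + 1/9)]
  · have hy2 : (3:ℝ)/64 ≤ y^2 := by nlinarith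
    have hE : (7:ℝ)/8 ≤ Real.exp (-x) := by nlinarith [Real.add_one_le_exp (-x)]
    have hsin2 : (9:ℝ)/16 * y^2 ≤ Real.sin y ^ 2 := by
      have hyne : y ≠ 0 := by intro h; rw [h] at hy2; norm_num at hy2
      rcases lt_or_gt_of_ne hyne with hy | hy
      · have := sin_sq_lb (v := -y) (by linarith) (by nlinarith [sq_nonneg (y+1)])
        rw [Real.sin_neg] at this; nlinarith [this]
      · exact sin_sq_lb hy (by nlinarith [sq_nonneg (y-1)])
    have hEE : (49:ℝ)/64 ≤ Real.exp (-x)^2 := by nlinarith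
    have hM : (49:ℝ)/64 * ((9:ℝ)/16 * y^2) ≤ Real.exp (-x)^2 * Real.sin y ^2 :=
      mul_le_mul hEE hsin2 (by positivity) (by positivity)
    nlinarith [sq_nonneg (Real.exp (-x) * Real.cos y - 1), hM, hy2]


lemma factor_id (z : ℂ) (s ε : ℝ) :
    ‖Complex.exp (-((s:ℂ) + (ε:ℂ)) * z) - Complex.exp (-(s:ℂ) * z)‖ ^ 2
      = Real.exp (-(2*s*z.re)) * ‖Complex.exp (-((ε:ℂ) * z)) - 1‖ ^ 2 := by
  have h1 : (-((s:ℂ) + (ε:ℂ))) * z = (-(s:ℂ) * z) + (-((ε:ℂ) * z)) := by ring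
  rw [h1, Complex.exp_add]
  have h2 : Complex.exp (-(s:ℂ)*z) * Complex.exp (-((ε:ℂ)*z)) - Complex.exp (-(s:ℂ)*z)
      = Complex.exp (-(s:ℂ)*z) * (Complex.exp (-((ε:ℂ)*z)) - 1) := by ring
  rw [h2, norm_mul, mul_pow, Complex.norm_exp]
  have h3 : (-(s:ℂ)*z).re = -(s*z.re) := by simp [Complex.neg_re, Complex.mul_re]
  rw [h3]
  have h4 : Real.exp (-(s*z.re)) ^ 2 = Real.exp (-(2*s*z.re)) := by
    rw [sq, ← Real.exp_add]; ring_nf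
  rw [h4]

lemma kernel_low (z : ℂ) (h0 : 0 ≤ z.re) {s ε : ℝ} (hs0 : 0 ≤ s) (hsx : s * z.re ≤ 1)
    (hε : 0 ≤ ε) (h1 : 1/4 ≤ ε * ‖z‖) (h2 : ε * ‖z‖ ≤ 1) :
    Real.exp (-2) * (1/81)
      ≤ ‖Complex.exp (-((s:ℂ) + (ε:ℂ)) * z) - Complex.exp (-(s:ℂ) * z)‖ ^ 2 := by
  rw [factor_id]
  have hb : (1:ℝ)/81 ≤ ‖Complex.exp (-((ε:ℂ) * z)) - 1‖ ^ 2 := by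
    apply kappa81
    · simp [Complex.mul_re, Complex.ofReal_re, Complex.ofReal_im]
      positivity
    · rwa [norm_mul, Complex.norm_of_nonneg hε]
    · rwa [norm_mul, Complex.norm_of_nonneg hε]
  have he : Real.exp (-2) ≤ Real.exp (-(2*s*z.re)) := by
    apply Real.exp_le_exp.2; nlinarith
  exact mul_le_mul he hb (by norm_num) (Real.exp_pos _).le


def gSet : ℕ → Set ℝ
  | 0 => Iic 1
  | (j+1) => Ioc ((2:ℝ)^j) ((2:ℝ)^(j+1))

/-- decomposition piece -/
def Apiece {E : Type*} (ψ : E → ℂ) (t : ℝ) (n j : ℕ) : Set E :=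
  ((fun ξ => ‖ψ ξ‖) ⁻¹' (Ico ((2:ℝ)^(n+1)) ((2:ℝ)^(n+2)))) ∩
    ((fun ξ => (ψ ξ).re * t) ⁻¹' gSet j)

section pieces
variable {E : Type*} [MeasurableSpace E] {ψ : E → ℂ} (t : ℝ)

lemma gSet_meas (j : ℕ) : MeasurableSet (gSet j) := by
  cases j with
  | zero => exact measurableSet_Iic
  | succ j => exact measurableSet_Ioc

lemma Apiece_meas (hψ : Measurable ψ) (n j : ℕ) : MeasurableSet (Apiece ψ t n j) := by
  have h1 : Measurable fun ξ => ‖ψ ξ‖ := continuous_norm.measurable.comp hψ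
  have h2 : Measurable fun ξ => (ψ ξ).re * t := (Complex.measurable_re.comp hψ).mul_const t
  exact (h1 measurableSet_Ico).inter (h2 (gSet_meas j))

lemma gSet_disj_aux {i j : ℕ} (hlt : i < j) : Disjoint (gSet i) (gSet j) := by
  rw [Set.disjoint_left]
  intro u hi hj
  match i, j, hlt with
  | 0, (j+1), _ =>
    simp only [gSet, mem_Iic, mem_Ioc] at hi hj
    have : (1:ℝ) ≤ 2^j := one_le_pow₀ (by norm_num)
    linarith [hj.1]
  | (i+1), (j+1), h =>
    simp only [gSet, mem_Ioc] at hi hj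
    have : (2:ℝ)^(i+1) ≤ 2^j := by
      apply pow_le_pow_right₀ (by norm_num); omega
    linarith [hi.2, hj.1]

lemma Apiece_disj_aux {n j n' j' : ℕ} (h : (n, j) ≠ (n', j')) :
    Disjoint (Apiece ψ t n j) (Apiece ψ t n' j') := by
  rcases eq_or_ne n n' with rfl | hn
  · have hj : j ≠ j' := by simpa using h
    refine Set.disjoint_left.2 fun ξ hξ hξ' => ?_
    rcases lt_or_gt_of_ne hj with hlt | hlt
    · exact Set.disjoint_left.1 (gSet_disj_aux hlt) hξ.2 hξ'.2
    · exact Set.disjoint_left.1 (gSet_disj_aux hlt) hξ'.2 hξ.2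
  · refine Set.disjoint_left.2 fun ξ hξ hξ' => ?_
    have h1 := hξ.1; have h2 := hξ'.1
    simp only [mem_preimage, mem_Ico] at h1 h2
    rcases lt_or_gt_of_ne hn with hlt | hlt
    · have : (2:ℝ)^(n+2) ≤ 2^(n'+1) := by
        apply pow_le_pow_right₀ (by norm_num); omega
      linarith [h1.2, h2.1]
    · have : (2:ℝ)^(n'+2) ≤ 2^(n+1) := by
        apply pow_le_pow_right₀ (by norm_num); omega
      linarith [h1.1, h2.2]

lemma Apiece_disj : Pairwise (Function.onFun Disjoint fun p : ℕ × ℕ => Apiece ψ t p.1 p.2) := by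
  intro p q hpq
  exact Apiece_disj_aux t (by exact fun h => hpq (by cases p; cases q; simpa using h))

lemma gSet_cover (u : ℝ) : ∃ j, u ∈ gSet j := by
  rcases le_or_gt u 1 with h | h
  · exact ⟨0, h⟩
  · have hex : ∃ m : ℕ, u ≤ 2^m := by
      obtain ⟨m, hm⟩ := pow_unbounded_of_one_lt u (by norm_num : (1:ℝ) < 2)
      exact ⟨m, hm.le⟩
    classical
    obtain ⟨m, hm, hmin⟩ : ∃ m, u ≤ 2^m ∧ ∀ k, k < m → ¬ u ≤ 2^k :=
      ⟨Nat.find hex, Nat.find_spec hex, fun k hk => Nat.find_min hex hk⟩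
    have hm0 : m ≠ 0 := by
      intro h0; rw [h0] at hm; simp at hm; linarith
    obtain ⟨k, hk⟩ := Nat.exists_eq_succ_of_ne_zero hm0
    subst hk
    refine ⟨k+1, ?_, ?_⟩
    · have := hmin k (by omega)
      push_neg at this; exact this
    · exact hm

lemma rad_cover {r : ℝ} (hr : 2 ≤ r) : ∃ n : ℕ, (2:ℝ)^(n+1) ≤ r ∧ r < 2^(n+2) := by
  have hex : ∃ m : ℕ, r < 2^m := pow_unbounded_of_one_lt r (by norm_num)
  classical
  obtain ⟨m, hm, hmin⟩ : ∃ m, r < 2^m ∧ ∀ k, k < m → ¬ r < 2^k :=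
    ⟨Nat.find hex, Nat.find_spec hex, fun k hk => Nat.find_min hex hk⟩
  have hm2 : 2 ≤ m := by
    by_contra h
    push_neg at h
    interval_cases m
    · simp at hm; linarith
    · norm_num at hm; linarith
  refine ⟨m - 2, ?_, ?_⟩
  · have := hmin (m-1) (by omega)
    push_neg at this
    have he : m - 2 + 1 = m - 1 := by omega
    rw [he]; exact this
  · have he : m - 2 + 2 = m := by omega
    rw [he]; exact hm

lemma Apiece_cover :
    {ξ | 2 ≤ ‖ψ ξ‖} = ⋃ p : ℕ × ℕ, Apiece ψ t p.1 p.2 := by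
  ext ξ
  simp only [mem_setOf_eq, mem_iUnion, Apiece, mem_inter_iff, mem_preimage, mem_Ico]
  constructor
  · intro h
    obtain ⟨n, hn1, hn2⟩ := rad_cover h
    obtain ⟨j, hj⟩ := gSet_cover ((ψ ξ).re * t)
    exact ⟨(n, j), ⟨hn1, hn2⟩, hj⟩
  · rintro ⟨⟨n, j⟩, ⟨h1, _⟩, _⟩
    have : (2:ℝ) ≤ 2^(n+1) := by
      calc (2:ℝ) = 2^1 := by norm_num
      _ ≤ 2^(n+1) := by apply pow_le_pow_right₀ (by norm_num); omega
    linarith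

end pieces

lemma Ioc_anti_disj_aux {b : ℕ → ℝ} (hb : Antitone b) {i j : ℕ} (hlt : i < j) :
    Disjoint (Ioc (b (i+1)) (b i)) (Ioc (b (j+1)) (b j)) := by
  rw [Set.disjoint_left]
  intro u hi hj
  simp only [mem_Ioc] at hi hj
  have : b j ≤ b (i+1) := hb (by omega)
  linarith [hi.1, hj.2]

lemma Ioc_anti_disj {b : ℕ → ℝ} (hb : Antitone b) :
    Pairwise (Function.onFun Disjoint fun n => Ioc (b (n+1)) (b n)) := by
  intro i j hij
  rcases lt_or_gt_of_ne hij with h | h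
  · exact Ioc_anti_disj_aux hb h
  · exact (Ioc_anti_disj_aux hb h).symm

lemma setLIntegral_ge_const {X : Type*} [MeasurableSpace X] (μ : Measure X) {s : Set X}
    (hs : MeasurableSet s) {f : X → ℝ≥0∞} {C : ℝ≥0∞} (h : ∀ x ∈ s, C ≤ f x) :
    C * μ s ≤ ∫⁻ x in s, f x ∂μ := by
  rw [← setLIntegral_const s C]
  exact lintegral_mono_ae ((ae_restrict_iff' hs).2 (ae_of_all _ h))

lemma setLIntegral_le_const {X : Type*} [MeasurableSpace X] (μ : Measure X) {s : Set X}
    (hs : MeasurableSet s) {f : X → ℝ≥0∞} {C : ℝ≥0∞} (h : ∀ x ∈ s, f x ≤ C) :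
    ∫⁻ x in s, f x ∂μ ≤ C * μ s := by
  rw [← setLIntegral_const s C]
  exact lintegral_mono_ae ((ae_restrict_iff' hs).2 (ae_of_all _ h))

lemma lhs_ptwise {t a x r : ℝ} (ht : 0 < t) (ha0 : 0 < a) (hx0 : 0 ≤ x) (hr0 : 0 ≤ r)
    {n j : ℕ} (hr : r < 2^(n+2)) (hj : x * t ∈ gSet j) :
    r ^ a / (1 + x) ≤ ((2:ℝ)^(n+2))^a * ((t/2^(j+1)) / min (t/2) (1/4)) := by
  have hc2 : (0:ℝ) < min (t/2) (1/4) := lt_min (by linarith) (by norm_num)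
  have hra : r ^ a ≤ ((2:ℝ)^(n+2))^a := Real.rpow_le_rpow hr0 hr.le ha0.le
  have hxb : 1 / (1 + x) ≤ (t/2^(j+1)) / min (t/2) (1/4) := by
    cases j with
    | zero =>
      rw [show gSet 0 = Iic 1 from rfl, mem_Iic] at hj
      have h1 : 1 / (1 + x) ≤ 1 := by
        rw [div_le_one (by linarith)]; linarith
      have h2 : (1:ℝ) ≤ (t/2^(0+1)) / min (t/2) (1/4) := by
        rw [le_div_iff₀ hc2]
        simpa using min_le_left (t/2) (1/4)
      linarith
    | succ j =>
      rw [show gSet (j+1) = Ioc ((2:ℝ)^j) ((2:ℝ)^(j+1)) from rfl, mem_Ioc] at hj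
      have hp : (0:ℝ) < 2^j := by positivity
      have hxpos : 0 < x := by nlinarith [hj.1]
      have h1 : 1 / (1 + x) ≤ 1 / x := by
        apply one_div_le_one_div_of_le hxpos; linarith
      have h2 : 1 / x ≤ t / 2^j := by
        rw [div_le_div_iff₀ hxpos hp]
        nlinarith [hj.1]
      have h3 : t / 2^j ≤ (t/2^(j+1+1)) / min (t/2) (1/4) := by
        have hmin : min (t/2) (1/4) ≤ 1/4 := min_le_right _ _
        rw [le_div_iff₀ hc2]
        have he : (2:ℝ)^(j+1+1) = 4 * 2^j := by ring
        rw [he, div_mul_eq_mul_div, div_le_div_iff₀ (by positivity) (by positivity)]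
        nlinarith [mul_le_mul_of_nonneg_left hmin (show (0:ℝ) ≤ t * (4 * 2^j) by positivity)]
      linarith
  calc r ^ a / (1 + x) = r ^ a * (1 / (1+x)) := by ring
  _ ≤ ((2:ℝ)^(n+2))^a * ((t/2^(j+1)) / min (t/2) (1/4)) :=
    mul_le_mul hra hxb (by positivity) (by positivity)

lemma eps_weight {a : ℝ} (ha0 : 0 < a) {n : ℕ} {ε : ℝ} (hε0 : 0 < ε) (hεle : ε ≤ 1/2^(n+2)) :
    ((2:ℝ)^(n+2))^(1+a) ≤ ε ^ (-1 - a) := by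
  have hP : (0:ℝ) < 2^(n+2) := by positivity
  have hexp : (-1 - a : ℝ) = -(1+a) := by ring
  rw [hexp, Real.rpow_neg hε0.le]
  have h1 : ε ^ (1+a) ≤ (((2:ℝ)^(n+2))⁻¹) ^ (1+a) :=
    Real.rpow_le_rpow hε0.le (by rwa [← one_div]) (by linarith)
  rw [Real.inv_rpow hP.le] at h1
  have h2 : (0:ℝ) < ε ^ (1+a) := Real.rpow_pos_of_pos hε0 _
  have h3 : (0:ℝ) < ((2:ℝ)^(n+2)) ^ (1+a) := Real.rpow_pos_of_pos hP _
  rw [le_inv_comm₀ h3 h2]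
  exact h1

lemma const_ineq {t a : ℝ} (ht : 0 < t) (ha0 : 0 < a) (n j : ℕ) :
    (min (t/2) (1/4) * Real.exp (-2) / 162) * (((2:ℝ)^(n+2))^a * ((t/2^(j+1)) / min (t/2) (1/4)))
      ≤ ((2:ℝ)^(n+2))^(1+a) * (1/2^(n+3)) * (Real.exp (-2) * (1/81) * (t/2^(j+1))) := by
  have hP : (0:ℝ) < 2^(n+2) := by positivity
  have hc2 : (0:ℝ) < min (t/2) (1/4) := lt_min (by linarith) (by norm_num)
  have e1 : ((2:ℝ)^(n+2))^(1+a) = (2:ℝ)^(n+2) * ((2:ℝ)^(n+2))^a := by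
    rw [Real.rpow_add hP, Real.rpow_one]
  have e2 : (2:ℝ)^(n+3) = 2 * 2^(n+2) := by ring
  rw [e1, e2]
  apply le_of_eq
  field_simp
  ring

lemma sx_bound {t x s : ℝ} (ht : 0 < t) (hx0 : 0 ≤ x) {j : ℕ}
    (hj : x * t ∈ gSet j) (hsu : s ≤ t/2^j) : s * x ≤ 1 := by
  cases j with
  | zero =>
    rw [show gSet 0 = Iic 1 from rfl, mem_Iic] at hj
    have h5 : s * x ≤ t * x := by
      apply mul_le_mul_of_nonneg_right _ hx0
      simpa using hsu
    nlinarith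
  | succ j =>
    rw [show gSet (j+1) = Ioc ((2:ℝ)^j) ((2:ℝ)^(j+1)) from rfl, mem_Ioc] at hj
    have hu : (0:ℝ) < 2^(j+1) := by positivity
    have h5 : s * x ≤ (t/2^(j+1)) * x := mul_le_mul_of_nonneg_right hsu hx0
    have h6 : (t/2^(j+1)) * x ≤ 1 := by
      rw [div_mul_eq_mul_div, div_le_one hu]
      nlinarith [hj.2]
    linarith

lemma quarter_le {t ε r : ℝ} (ht : 0 < t) {n : ℕ} (hεl : 1/2^(n+3) < ε)
    (hrl : (2:ℝ)^(n+1) ≤ r) (hε0 : 0 ≤ ε) (hr0 : 0 < (2:ℝ)^(n+1)) : 1/4 ≤ ε * r := by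
  have h7 : (1:ℝ)/2^(n+3) * 2^(n+1) ≤ ε * r :=
    mul_le_mul hεl.le hrl hr0.le hε0
  have h8 : (1:ℝ)/2^(n+3) * 2^(n+1) = 1/4 := by
    rw [show (2:ℝ)^(n+3) = 4*2^(n+1) by ring]
    field_simp
  linarith

lemma prod_le_one {ε r : ℝ} {n : ℕ} (hεu : ε ≤ 1/2^(n+2)) (hru : r < 2^(n+2))
    (hr0 : 0 ≤ r) (hε0 : 0 ≤ ε) : ε * r ≤ 1 := by
  have h : ε * r ≤ (1/2^(n+2)) * 2^(n+2) :=
    mul_le_mul hεu hru.le hr0 (by positivity)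
  have h2 : (1:ℝ)/2^(n+2) * 2^(n+2) = 1 := by field_simp
  linarith


section main
variable {EE : Type*} [MeasurableSpace EE]

lemma main_ineq (a t : ℝ) (ha0 : 0 < a) (ht : 0 < t)
    (ψ : EE → ℂ) (μ : Measure EE) (hψ : Measurable ψ) (hre : ∀ ξ, 0 ≤ (ψ ξ).re) :
    ENNReal.ofReal (min (t/2) (1/4) * Real.exp (-2) / 162) *
        (∫⁻ ξ in {ξ : EE | 2 ≤ ‖ψ ξ‖},
          ENNReal.ofReal (‖ψ ξ‖ ^ a / (1 + (ψ ξ).re)) ∂μ) ≤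
      ∫⁻ ε in Ioc (0 : ℝ) 1, ENNReal.ofReal (ε ^ (-1 - a)) *
        ∫⁻ s in Ioc (0 : ℝ) t,
          ∫⁻ ξ, ENNReal.ofReal
            (‖Complex.exp (-((s : ℂ) + (ε : ℂ)) * ψ ξ) -
              Complex.exp (-(s : ℂ) * ψ ξ)‖ ^ 2) ∂μ := by
  have hc2 : (0:ℝ) < min (t/2) (1/4) := lt_min (by linarith) (by norm_num)
  set c : ℝ := min (t/2) (1/4) * Real.exp (-2) / 162 with hcdef
  have hc : 0 < c := by positivity
  -- the LHS integrand
  set I : EE → ℝ≥0∞ := fun ξ => ENNReal.ofReal (‖ψ ξ‖ ^ a / (1 + (ψ ξ).re)) with hIdef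
  -- the kernel
  set f : ℝ → ℝ → EE → ℝ≥0∞ := fun ε s ξ => ENNReal.ofReal
      (‖Complex.exp (-((s : ℂ) + (ε : ℂ)) * ψ ξ) -
        Complex.exp (-(s : ℂ) * ψ ξ)‖ ^ 2) with hfdef
  -- inner integrals
  set G : ℝ → ℝ → ℝ≥0∞ := fun ε s => ∫⁻ ξ, f ε s ξ ∂μ with hGdef
  set H : ℝ → ℝ≥0∞ := fun ε => ∫⁻ s in Ioc (0:ℝ) t, G ε s with hHdef
  -- the per-piece constant
  set X : ℕ × ℕ → ℝ≥0∞ := fun p => ENNReal.ofReal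
      (((2:ℝ)^(p.1+2))^(1+a) * (1/2^(p.1+3)) * (Real.exp (-2) * (1/81) * (t/2^(p.2+1)))) *
      μ (Apiece ψ t p.1 p.2) with hXdef
  -- termwise bound on the LHS side
  have keyL : ∀ p : ℕ × ℕ, ENNReal.ofReal c * ∫⁻ ξ in Apiece ψ t p.1 p.2, I ξ ∂μ ≤ X p := by
    rintro ⟨n, j⟩
    have hY : ∫⁻ ξ in Apiece ψ t n j, I ξ ∂μ ≤
        ENNReal.ofReal (((2:ℝ)^(n+2))^a * ((t/2^(j+1)) / min (t/2) (1/4))) * μ (Apiece ψ t n j) := by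
      apply setLIntegral_le_const μ (Apiece_meas t hψ n j)
      intro ξ hξ
      obtain ⟨h1, h2⟩ := hξ
      simp only [mem_preimage, mem_Ico] at h1
      apply ENNReal.ofReal_le_ofReal
      exact lhs_ptwise ht ha0 (hre ξ) (norm_nonneg _) h1.2 h2
    calc ENNReal.ofReal c * ∫⁻ ξ in Apiece ψ t n j, I ξ ∂μ
        ≤ ENNReal.ofReal c *
          (ENNReal.ofReal (((2:ℝ)^(n+2))^a * ((t/2^(j+1)) / min (t/2) (1/4))) * μ (Apiece ψ t n j)) :=
          mul_le_mul_right hY _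
      _ = ENNReal.ofReal (c * (((2:ℝ)^(n+2))^a * ((t/2^(j+1)) / min (t/2) (1/4)))) * μ (Apiece ψ t n j) := by
          rw [← mul_assoc, ← ENNReal.ofReal_mul hc.le]
      _ ≤ X (n, j) := by
          apply mul_le_mul_left
          apply ENNReal.ofReal_le_ofReal
          exact const_ineq ht ha0 n j
  -- per-n bound on the RHS side
  have keyR : ∀ n : ℕ, ∑' j : ℕ, X (n, j) ≤
      ∫⁻ ε in Ioc ((1:ℝ)/2^(n+3)) (1/2^(n+2)), ENNReal.ofReal (ε ^ (-1 - a)) * H ε := by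
    intro n
    set Hlow : ℝ≥0∞ := ∑' j : ℕ,
      ENNReal.ofReal (Real.exp (-2) * (1/81) * (t/2^(j+1))) * μ (Apiece ψ t n j) with hHlowdef
    have step1 : ∀ ε ∈ Ioc ((1:ℝ)/2^(n+3)) (1/2^(n+2)),
        ENNReal.ofReal (((2:ℝ)^(n+2))^(1+a)) * Hlow ≤ ENNReal.ofReal (ε ^ (-1 - a)) * H ε := by
      intro ε hε
      obtain ⟨hεl, hεu⟩ := hε
      have hε0 : (0:ℝ) < ε := lt_trans (by positivity) hεl
      apply mul_le_mul'
      · exact ENNReal.ofReal_le_ofReal (eps_weight ha0 hε0 hεu)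
      · -- Hlow ≤ H ε
        have step_j : ∀ j : ℕ,
            ENNReal.ofReal (Real.exp (-2) * (1/81) * (t/2^(j+1))) * μ (Apiece ψ t n j) ≤
            ∫⁻ s in Ioc (t/2^(j+1)) (t/2^j), G ε s := by
          intro j
          have hGlow : ∀ s ∈ Ioc (t/2^(j+1)) (t/2^j),
              ENNReal.ofReal (Real.exp (-2) * (1/81)) * μ (Apiece ψ t n j) ≤ G ε s := by
            intro s hs
            obtain ⟨hsl, hsu⟩ := hs
            have hs0 : (0:ℝ) ≤ s := le_of_lt (lt_of_le_of_lt (by positivity) hsl)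
            calc ENNReal.ofReal (Real.exp (-2) * (1/81)) * μ (Apiece ψ t n j)
                ≤ ∫⁻ ξ in Apiece ψ t n j, f ε s ξ ∂μ := by
                  apply setLIntegral_ge_const μ (Apiece_meas t hψ n j)
                  intro ξ hξ
                  obtain ⟨h1, h2⟩ := hξ
                  simp only [mem_preimage, mem_Ico] at h1
                  apply ENNReal.ofReal_le_ofReal
                  apply kernel_low (ψ ξ) (hre ξ) hs0
                  · exact sx_bound ht (hre ξ) h2 hsu
                  · exact hε0.le
                  · exact quarter_le ht hεl h1.1 hε0.le (by positivity)
                  · exact prod_le_one hεu h1.2 (norm_nonneg _) hε0.le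
              _ ≤ G ε s := setLIntegral_le_lintegral _ _
          calc ENNReal.ofReal (Real.exp (-2) * (1/81) * (t/2^(j+1))) * μ (Apiece ψ t n j)
              = (ENNReal.ofReal (Real.exp (-2) * (1/81)) * μ (Apiece ψ t n j)) *
                  volume (Ioc (t/2^(j+1)) (t/2^j)) := by
                rw [Real.volume_Ioc, ENNReal.ofReal_mul (by positivity)]
                rw [show t/2^j - t/2^(j+1) = t/2^(j+1) by
                  rw [show (2:ℝ)^(j+1) = 2*2^j by ring]; field_simp; ring]
                ring
            _ ≤ ∫⁻ s in Ioc (t/2^(j+1)) (t/2^j), G ε s :=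
                setLIntegral_ge_const volume measurableSet_Ioc hGlow
        calc Hlow ≤ ∑' j : ℕ, ∫⁻ s in Ioc (t/2^(j+1)) (t/2^j), G ε s :=
              ENNReal.tsum_le_tsum step_j
          _ = ∫⁻ s in ⋃ j : ℕ, Ioc (t/2^(j+1)) (t/2^j), G ε s := by
              refine (lintegral_iUnion (fun j => measurableSet_Ioc) ?_ _).symm
              exact Ioc_anti_disj (b := fun j => t/2^j)
                (fun i j hij => by
                  apply div_le_div_of_nonneg_left ht.le (by positivity)
                  exact pow_le_pow_right₀ (by norm_num) hij)
          _ ≤ H ε := by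
              apply lintegral_mono_set
              apply iUnion_subset
              intro j
              apply Ioc_subset_Ioc (by positivity)
              apply div_le_self ht.le (one_le_pow₀ (by norm_num))
    -- integrate over the ε window
    calc ∑' j : ℕ, X (n, j)
        = ENNReal.ofReal (((2:ℝ)^(n+2))^(1+a) * (1/2^(n+3))) * Hlow := by
          rw [hHlowdef, ← ENNReal.tsum_mul_left]
          congr 1
          ext j
          rw [hXdef]
          simp only
          rw [ENNReal.ofReal_mul (show (0:ℝ) ≤ ((2:ℝ)^(n+2))^(1+a) * (1/2^(n+3)) by positivity),
            mul_assoc]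
      _ = (ENNReal.ofReal (((2:ℝ)^(n+2))^(1+a)) * Hlow) * volume (Ioc ((1:ℝ)/2^(n+3)) (1/2^(n+2))) := by
          rw [Real.volume_Ioc, ENNReal.ofReal_mul (by positivity)]
          rw [show (1:ℝ)/2^(n+2) - 1/2^(n+3) = 1/2^(n+3) by
            rw [show (2:ℝ)^(n+3) = 2*2^(n+2) by ring]; field_simp; ring]
          ring
      _ ≤ ∫⁻ ε in Ioc ((1:ℝ)/2^(n+3)) (1/2^(n+2)), ENNReal.ofReal (ε ^ (-1 - a)) * H ε :=
          setLIntegral_ge_const volume measurableSet_Ioc step1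
  -- assemble
  calc ENNReal.ofReal c * ∫⁻ ξ in {ξ : EE | 2 ≤ ‖ψ ξ‖}, I ξ ∂μ
      = ENNReal.ofReal c * ∑' p : ℕ × ℕ, ∫⁻ ξ in Apiece ψ t p.1 p.2, I ξ ∂μ := by
        rw [Apiece_cover t, lintegral_iUnion (fun p : ℕ × ℕ => Apiece_meas t hψ p.1 p.2) (Apiece_disj t)]
    _ = ∑' p : ℕ × ℕ, ENNReal.ofReal c * ∫⁻ ξ in Apiece ψ t p.1 p.2, I ξ ∂μ :=
        ENNReal.tsum_mul_left.symm
    _ ≤ ∑' p : ℕ × ℕ, X p := ENNReal.tsum_le_tsum keyL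
    _ = ∑' n : ℕ, ∑' j : ℕ, X (n, j) := ENNReal.tsum_prod'
    _ ≤ ∑' n : ℕ, ∫⁻ ε in Ioc ((1:ℝ)/2^(n+3)) (1/2^(n+2)), ENNReal.ofReal (ε ^ (-1 - a)) * H ε :=
        ENNReal.tsum_le_tsum keyR
    _ = ∫⁻ ε in ⋃ n : ℕ, Ioc ((1:ℝ)/2^(n+3)) (1/2^(n+2)), ENNReal.ofReal (ε ^ (-1 - a)) * H ε := by
        refine (lintegral_iUnion (fun n => measurableSet_Ioc) ?_ _).symm
        exact Ioc_anti_disj (b := fun n => 1/2^(n+2))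
          (fun i j hij => by
            apply div_le_div_of_nonneg_left (by norm_num) (by positivity)
            exact pow_le_pow_right₀ (by norm_num) (by omega))
    _ ≤ ∫⁻ ε in Ioc (0:ℝ) 1, ENNReal.ofReal (ε ^ (-1 - a)) * H ε := by
        apply lintegral_mono_set
        apply iUnion_subset
        intro n
        apply Ioc_subset_Ioc (by positivity)
        calc (1:ℝ)/2^(n+2) ≤ 1/2^0 := by
              apply div_le_div_of_nonneg_left (by norm_num) (by positivity)
              exact pow_le_pow_right₀ (by norm_num) (by omega)
          _ = 1 := by norm_num

end main


/-- Lower bound (display (4.3)) showing `𝓘̄_H(T) ≤ ind_H` for the heat kernel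
`e^{-sψ}`. The constant `c` depends only on `a`, `t` and `d`. -/
theorem stmt_10 (a t : ℝ) (ha : a ∈ Ioo (0 : ℝ) 1) (ht : 0 < t) (d : ℕ) (hd : 1 ≤ d) :
    ∃ c : ℝ, 0 < c ∧
      ∀ (ψ : EuclideanSpace ℝ (Fin d) → ℂ)
        (μ : Measure (EuclideanSpace ℝ (Fin d))),
        Measurable ψ → (∀ ξ, 0 ≤ (ψ ξ).re) →
        ENNReal.ofReal c *
            (∫⁻ ξ in {ξ : EuclideanSpace ℝ (Fin d) | 2 ≤ ‖ψ ξ‖},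
              ENNReal.ofReal (‖ψ ξ‖ ^ a / (1 + (ψ ξ).re)) ∂μ) ≤
          ∫⁻ ε in Ioc (0 : ℝ) 1, ENNReal.ofReal (ε ^ (-1 - a)) *
            ∫⁻ s in Ioc (0 : ℝ) t,
              ∫⁻ ξ, ENNReal.ofReal
                (‖Complex.exp (-((s : ℂ) + (ε : ℂ)) * ψ ξ) -
                  Complex.exp (-(s : ℂ) * ψ ξ)‖ ^ 2) ∂μ := by
  refine ⟨min (t/2) (1/4) * Real.exp (-2) / 162, ?_, ?_⟩
  · have : (0:ℝ) < min (t/2) (1/4) := lt_min (by linarith) (by norm_num)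
    positivity
  · intro ψ μ hψ hre
    exact main_ineq a t ha.1 ht ψ μ hψ hre
end

section
/- Let d ≥ 1, let ψ : ℝ^d → [0,∞) be continuous with ψ(ξ) → ∞ as ‖ξ‖ → ∞, and let μ be a Borel measure on ℝ^d that is finite on compact sets. Then the following are equivalent: (i) ∫₀ᵀ t² ( ∫_{ℝ^d} sinc²( t·√(ψ(ξ)) ) μ(dξ) ) dt < ∞ for every T > 0; (ii) ∫_{ℝ^d} (1 + ψ(ξ))^{−1} μ(dξ) < ∞. -/
open MeasureTheory Set Filter

/-- `sinc x = sin x / x` for `x ≠ 0`, `sinc 0 = 1`. -/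
noncomputable def sinc (x : ℝ) : ℝ := if x = 0 then 1 else Real.sin x / x

/-!
For `a = √ψ(ξ)` the integrand `(t sinc(t a))² = sin²(t a) / a²` is at most `min(t², a⁻²)`,
hence at most `(1 + T²) / (1 + a²)` on `(0, T]`, which gives (ii) ⇒ (i). Conversely
`∫₀¹ (t sinc(t a))² dt ≥ 1 / (27 (1 + a²))`: for `|a| ≤ 2` because `sinc ≥ 1/3` on `[-2, 2]`,
and for `|a| ≥ 2` because `∫₀¹ sin²(t a) dt = 1/2 - sin a cos a / (2a) ≥ 1/4`. Integrating in
`ξ` and swapping the integrals by Tonelli gives (i) ⇒ (ii).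
-/

open ENNReal (ofReal)

theorem sinc_eq_real_sinc : sinc = Real.sinc := rfl

theorem continuous_sinc : Continuous sinc := Real.continuous_sinc

theorem mul_sinc_self (x : ℝ) : x * sinc x = Real.sin x := by
  rcases eq_or_ne x 0 with rfl | hx
  · simp
  · rw [sinc_eq_real_sinc, Real.sinc_of_ne_zero hx, mul_div_cancel₀ _ hx]

theorem mul_mul_sinc_mul (a t : ℝ) : a * (t * sinc (t * a)) = Real.sin (t * a) := by
  rw [← mul_assoc, mul_comm a t, mul_sinc_self]

theorem one_sub_sq_div_six_le_sinc (x : ℝ) : 1 - x ^ 2 / 6 ≤ sinc x := by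
  wlog hx : 0 < x generalizing x
  · rcases (not_lt.1 hx).eq_or_lt with rfl | hneg
    · simp [sinc]
    · simpa [sinc_eq_real_sinc, Real.sinc_neg] using this (-x) (neg_pos.2 hneg)
  rw [sinc_eq_real_sinc, Real.sinc_of_ne_zero hx.ne', le_div_iff₀ hx]
  nlinarith [Real.sin_ge_sub_cube hx.le]

theorem sq_mul_sinc_mul_le {t T : ℝ} (a : ℝ) (ht : |t| ≤ T) :
    (t * sinc (t * a)) ^ 2 ≤ (1 + T ^ 2) * (1 / (1 + a ^ 2)) := by
  rw [mul_one_div, le_div_iff₀ (by positivity)]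
  have h_le_sq : (t * sinc (t * a)) ^ 2 ≤ T ^ 2 := by
    rw [mul_pow]
    have hsinc : sinc (t * a) ^ 2 ≤ 1 := sq_le_one_iff_abs_le_one _ |>.2 (Real.abs_sinc_le_one _)
    have ht2 : t ^ 2 ≤ T ^ 2 := sq_le_sq.2 (ht.trans (le_abs_self T))
    nlinarith [sq_nonneg t]
  have h_le_one : a ^ 2 * (t * sinc (t * a)) ^ 2 ≤ 1 := by
    rw [← mul_pow, mul_mul_sinc_mul]
    exact Real.sin_sq_le_one _
  nlinarith

theorem le_integral_sq_mul_sinc_mul_of_abs_le_two {a : ℝ} (ha : |a| ≤ 2) :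
    1 / 27 ≤ ∫ t in (0 : ℝ)..1, (t * sinc (t * a)) ^ 2 := by
  have hcont : Continuous fun t : ℝ => (t * sinc (t * a)) ^ 2 := by
    have := continuous_sinc; fun_prop
  calc (1 : ℝ) / 27 = ∫ t in (0 : ℝ)..1, t ^ 2 / 9 := by
        norm_num [intervalIntegral.integral_div, integral_pow]
    _ ≤ ∫ t in (0 : ℝ)..1, (t * sinc (t * a)) ^ 2 := by
        refine intervalIntegral.integral_mono_on zero_le_one
          (((continuous_pow 2).div_const 9).intervalIntegrable _ _)
          (hcont.intervalIntegrable _ _) fun t ht => ?_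
        have hta : (t * a) ^ 2 ≤ 4 := by
          rw [mul_pow]
          nlinarith [sq_le_sq.2 (ha.trans_eq (abs_two).symm), sq_le_one_iff_abs_le_one t |>.2
            (abs_le.2 ⟨by linarith [ht.1], ht.2⟩), sq_nonneg a]
        have hsinc : 1 / 3 ≤ sinc (t * a) := by
          linarith [one_sub_sq_div_six_le_sinc (t * a)]
        rw [mul_pow]
        nlinarith [sq_nonneg t, mul_self_le_mul_self (by norm_num) hsinc]

theorem le_integral_sq_mul_sinc_mul_of_two_le_abs {a : ℝ} (ha : 2 ≤ |a|) :
    1 / (4 * a ^ 2) ≤ ∫ t in (0 : ℝ)..1, (t * sinc (t * a)) ^ 2 := by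
  have ha0 : a ≠ 0 := by rintro rfl; norm_num at ha
  have hsinc : ∀ t, (t * sinc (t * a)) ^ 2 = Real.sin (t * a) ^ 2 / a ^ 2 := fun t => by
    rw [eq_div_iff (by positivity), ← mul_pow, mul_comm, mul_mul_sinc_mul]
  have hint : ∫ t in (0 : ℝ)..1, (t * sinc (t * a)) ^ 2 =
      (1 / 2 - Real.sin a * Real.cos a / (2 * a)) / a ^ 2 := by
    simp only [hsinc, intervalIntegral.integral_div,
      intervalIntegral.integral_comp_mul_right (fun x => Real.sin x ^ 2) ha0, integral_sin_sq,
      zero_mul, one_mul, Real.sin_zero, smul_eq_mul]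
    field_simp
    ring
  have hsc : |Real.sin a * Real.cos a / (2 * a)| ≤ 1 / 4 := by
    rw [abs_div, abs_mul, abs_mul, abs_two, div_le_iff₀ (by positivity)]
    nlinarith [Real.abs_sin_le_one a, Real.abs_cos_le_one a, abs_nonneg (Real.sin a),
      abs_nonneg (Real.cos a)]
  rw [hint, div_le_div_iff₀ (by positivity) (by positivity)]
  nlinarith [(abs_le.1 hsc).2, sq_nonneg a]

theorem le_integral_sq_mul_sinc_mul (a : ℝ) :
    1 / 27 * (1 / (1 + a ^ 2)) ≤ ∫ t in (0 : ℝ)..1, (t * sinc (t * a)) ^ 2 := by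
  rcases le_or_gt |a| 2 with ha | ha
  · refine le_trans ?_ (le_integral_sq_mul_sinc_mul_of_abs_le_two ha)
    exact mul_le_of_le_one_right (by norm_num) (div_le_one_of_le₀ (by nlinarith) (by positivity))
  · refine le_trans ?_ (le_integral_sq_mul_sinc_mul_of_two_le_abs ha.le)
    have ha0 : 0 < a ^ 2 := by
      have : a ≠ 0 := by rintro rfl; norm_num at ha
      positivity
    rw [one_div_mul_one_div, one_div_le_one_div (by positivity) (by positivity)]
    nlinarith

theorem ofReal_le_lintegral_sq_mul_sinc_mul (a : ℝ) :
    ofReal (1 / 27 * (1 / (1 + a ^ 2))) ≤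
      ∫⁻ t in Ioc (0 : ℝ) 1, ofReal ((t * sinc (t * a)) ^ 2) := by
  have hcont : Continuous fun t : ℝ => (t * sinc (t * a)) ^ 2 := by
    have := continuous_sinc; fun_prop
  rw [← ofReal_integral_eq_lintegral_ofReal hcont.integrableOn_Ioc
    (.of_forall fun t => sq_nonneg _), ← intervalIntegral.integral_of_le zero_le_one]
  exact ENNReal.ofReal_le_ofReal (le_integral_sq_mul_sinc_mul a)

section

variable {X : Type*} [MeasurableSpace X] (μ : Measure X) (a : X → ℝ)

theorem setLIntegral_lintegral_sq_mul_sinc_le (T : ℝ) :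
    ∫⁻ t in Ioc 0 T, ∫⁻ x, ofReal ((t * sinc (t * a x)) ^ 2) ∂μ ≤
      volume (Ioc 0 T) * (ofReal (1 + T ^ 2) * ∫⁻ x, ofReal (1 / (1 + a x ^ 2)) ∂μ) := by
  calc _ ≤ ∫⁻ _ in Ioc 0 T, ofReal (1 + T ^ 2) * ∫⁻ x, ofReal (1 / (1 + a x ^ 2)) ∂μ := by
        refine setLIntegral_mono measurable_const fun t ht => ?_
        rw [← lintegral_const_mul' _ _ ENNReal.ofReal_ne_top]
        refine lintegral_mono fun x => ?_
        rw [← ENNReal.ofReal_mul (by positivity)]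
        exact ENNReal.ofReal_le_ofReal
          (sq_mul_sinc_mul_le (a x) ((abs_of_pos ht.1).trans_le ht.2))
    _ = _ := by rw [setLIntegral_const, mul_comm]

theorem ofReal_mul_lintegral_one_div_one_add_sq_le [SFinite μ] (ha : Measurable a) :
    ofReal (1 / 27) * ∫⁻ x, ofReal (1 / (1 + a x ^ 2)) ∂μ ≤
      ∫⁻ t in Ioc 0 1, ∫⁻ x, ofReal ((t * sinc (t * a x)) ^ 2) ∂μ := by
  have hmeas : Measurable fun p : ℝ × X => ofReal ((p.1 * sinc (p.1 * a p.2)) ^ 2) := by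
    have := continuous_sinc.measurable; fun_prop
  rw [lintegral_lintegral_swap hmeas.aemeasurable,
    ← lintegral_const_mul' _ _ ENNReal.ofReal_ne_top]
  refine lintegral_mono fun x => ?_
  rw [← ENNReal.ofReal_mul (by norm_num)]
  exact ofReal_le_lintegral_sq_mul_sinc_mul (a x)

theorem forall_lintegral_sq_mul_sinc_lt_top_iff [SFinite μ] (ha : Measurable a) :
    (∀ T : ℝ, 0 < T → ∫⁻ t in Ioc 0 T, ∫⁻ x, ofReal ((t * sinc (t * a x)) ^ 2) ∂μ < ⊤) ↔
      ∫⁻ x, ofReal (1 / (1 + a x ^ 2)) ∂μ < ⊤ := by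
  refine ⟨fun h => ?_, fun h T _ => ?_⟩
  · have := (ofReal_mul_lintegral_one_div_one_add_sq_le μ a ha).trans_lt (h 1 one_pos)
    exact ENNReal.lt_top_of_mul_ne_top_right this.ne (by norm_num)
  · refine (setLIntegral_lintegral_sq_mul_sinc_le μ a T).trans_lt ?_
    exact ENNReal.mul_lt_top measure_Ioc_lt_top (ENNReal.mul_lt_top ENNReal.ofReal_lt_top h)

end

theorem stmt_15_general (d : ℕ)
    (ψ : EuclideanSpace ℝ (Fin d) → ℝ) (hψcont : Continuous ψ)
    (hψ0 : ∀ ξ, 0 ≤ ψ ξ)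
    (μ : Measure (EuclideanSpace ℝ (Fin d))) [IsFiniteMeasureOnCompacts μ] :
    (∀ T : ℝ, 0 < T →
        (∫⁻ t in Ioc (0 : ℝ) T, ENNReal.ofReal (t ^ 2) *
          ∫⁻ ξ, ENNReal.ofReal (sinc (t * Real.sqrt (ψ ξ)) ^ 2) ∂μ) < ⊤) ↔
      (∫⁻ ξ, ENNReal.ofReal (1 / (1 + ψ ξ)) ∂μ) < ⊤ := by
  have hinner : ∀ t : ℝ, ofReal (t ^ 2) * ∫⁻ ξ, ofReal (sinc (t * Real.sqrt (ψ ξ)) ^ 2) ∂μ =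
      ∫⁻ ξ, ofReal ((t * sinc (t * Real.sqrt (ψ ξ))) ^ 2) ∂μ := fun t => by
    simp only [← lintegral_const_mul' _ _ ENNReal.ofReal_ne_top,
      ← ENNReal.ofReal_mul (sq_nonneg t), mul_pow]
  simp only [hinner]
  simpa only [Real.sq_sqrt (hψ0 _)] using
    forall_lintegral_sq_mul_sinc_lt_top_iff μ (fun ξ => Real.sqrt (ψ ξ)) hψcont.measurable.sqrt

/-- The linear stochastic wave equation has a random-field solution iff Dalang's
condition holds: square integrability of `t sinc(t √ψ(ξ))` against `dt × μ(dξ)`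
on `(0,T)` for all `T > 0` is equivalent to `∫ (1+ψ)^{-1} dμ < ∞`. -/
theorem stmt_15 (d : ℕ) (hd : 1 ≤ d)
    (ψ : EuclideanSpace ℝ (Fin d) → ℝ) (hψcont : Continuous ψ)
    (hψ0 : ∀ ξ, 0 ≤ ψ ξ)
    (hpsiInf : Tendsto ψ (Filter.cocompact (EuclideanSpace ℝ (Fin d))) Filter.atTop)
    (μ : Measure (EuclideanSpace ℝ (Fin d))) [IsFiniteMeasureOnCompacts μ] :
    (∀ T : ℝ, 0 < T →
        (∫⁻ t in Ioc (0 : ℝ) T, ENNReal.ofReal (t ^ 2) *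
          ∫⁻ ξ, ENNReal.ofReal (sinc (t * Real.sqrt (ψ ξ)) ^ 2) ∂μ) < ⊤) ↔
      (∫⁻ ξ, ENNReal.ofReal (1 / (1 + ψ ξ)) ∂μ) < ⊤ :=
  stmt_15_general d ψ hψcont hψ0 μ
end

section
/- Let d ≥ 1, let ψ : ℝ^d → [0,∞) be measurable, let μ be a Borel measure on ℝ^d, and fix b ∈ (0,2) and t > 0. Set w(s,ξ) = s·sinc( s·√(ψ(ξ)) ) for s ≥ 0 and ξ ∈ ℝ^d. Then there exists a constant C > 0, depending only on b, such that ∫₀¹ ε^{−1−b} ( sup_{r∈[0,ε]} ∫₀ᵗ ∫_{ℝ^d} | w(s+r,ξ) − w(s,ξ) |² μ(dξ) ds ) dε ≤ C·t·∫_{ℝ^d} (1 + ψ(ξ))^{(b/2)−1} μ(dξ). -/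
open MeasureTheory Set
open scoped ENNReal

/-!
Both `|w(s + r, ξ) - w(s, ξ)| ≤ r` (since `w(·, ξ) = sin(· √ψ(ξ)) / √ψ(ξ)` is 1-Lipschitz) and
`|w(s + r, ξ) - w(s, ξ)| ≤ 2 / √ψ(ξ)`, so for `r ≤ ε ≤ 1` the squared increment is at most
`min (ε², K(ξ))` with `K = 8 / (1 + ψ)`. After Tonelli (`μ` is σ-finite as soon as the right-hand
side is finite), everything reduces to the scaling identity
`∫₀^∞ ε^(-1-b) min (ε², K) dε = (1 / (2 - b) + 1 / b) K^(1 - b/2)`, obtained by splitting at `ε = √K`.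
-/

/-- `w(s, ξ)` of the paper is `waveKernel (√ψ(ξ)) s`. -/
noncomputable def waveKernel (a s : ℝ) : ℝ := s * sinc (s * a)

lemma waveKernel_zero_left (s : ℝ) : waveKernel 0 s = s := by
  simp [waveKernel, sinc]

lemma waveKernel_eq_sin_div {a : ℝ} (ha : a ≠ 0) (s : ℝ) :
    waveKernel a s = Real.sin (s * a) / a := by
  rcases eq_or_ne s 0 with rfl | hs
  · simp [waveKernel]
  · rw [waveKernel, sinc, if_neg (mul_ne_zero hs ha)]
    field_simp

lemma abs_waveKernel_sub_le_abs_sub {a : ℝ} (ha : 0 ≤ a) (s s' : ℝ) :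
    |waveKernel a s' - waveKernel a s| ≤ |s' - s| := by
  rcases ha.eq_or_lt with rfl | ha
  · simp only [waveKernel_zero_left, le_refl]
  rw [waveKernel_eq_sin_div ha.ne', waveKernel_eq_sin_div ha.ne', div_sub_div_same, abs_div,
    abs_of_pos ha, div_le_iff₀ ha]
  calc |Real.sin (s' * a) - Real.sin (s * a)| ≤ |s' * a - s * a| := Real.abs_sin_sub_sin_le _ _
    _ = |s' - s| * a := by rw [← sub_mul, abs_mul, abs_of_pos ha]

lemma abs_waveKernel_sub_le_two_div {a : ℝ} (ha : 0 < a) (s s' : ℝ) :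
    |waveKernel a s' - waveKernel a s| ≤ 2 / a := by
  rw [waveKernel_eq_sin_div ha.ne', waveKernel_eq_sin_div ha.ne', div_sub_div_same, abs_div,
    abs_of_pos ha]
  gcongr
  calc |Real.sin (s' * a) - Real.sin (s * a)| ≤ |Real.sin (s' * a)| + |Real.sin (s * a)| :=
        abs_sub _ _
    _ ≤ 1 + 1 := add_le_add (Real.abs_sin_le_one _) (Real.abs_sin_le_one _)
    _ = 2 := one_add_one_eq_two

lemma sq_waveKernel_sub_le_min {p ε s s' : ℝ} (hp : 0 ≤ p) (hss' : |s' - s| ≤ ε) (hε : ε ≤ 1) :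
    (waveKernel (Real.sqrt p) s' - waveKernel (Real.sqrt p) s) ^ 2 ≤ min (ε ^ 2) (8 / (1 + p)) := by
  set D := waveKernel (Real.sqrt p) s' - waveKernel (Real.sqrt p) s
  have hD : |D| ≤ ε := (abs_waveKernel_sub_le_abs_sub (Real.sqrt_nonneg p) s s').trans hss'
  have hDε : D ^ 2 ≤ ε ^ 2 := sq_le_sq' (abs_le.1 hD).1 (abs_le.1 hD).2
  refine le_min hDε ?_
  rcases le_or_gt p 1 with hp1 | hp1
  · calc D ^ 2 ≤ ε ^ 2 := hDε
      _ ≤ 1 := pow_le_one₀ ((abs_nonneg D).trans hD) hε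
      _ ≤ 8 / (1 + p) := by rw [le_div_iff₀ (by linarith)]; linarith
  · have hsqrt : 0 < Real.sqrt p := Real.sqrt_pos.2 (by linarith)
    calc D ^ 2 = |D| ^ 2 := (sq_abs D).symm
      _ ≤ (2 / Real.sqrt p) ^ 2 := by
          gcongr; exact abs_waveKernel_sub_le_two_div hsqrt s s'
      _ = 4 / p := by rw [div_pow, Real.sq_sqrt hp]; norm_num
      _ ≤ 8 / (1 + p) := by rw [div_le_div_iff₀ (by linarith) (by linarith)]; linarith

lemma iSup_setLIntegral_lintegral_sq_waveKernel_sub_le {α : Type*} [MeasurableSpace α]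
    (μ : Measure α) {ψ : α → ℝ} (hψ : ∀ x, 0 ≤ ψ x) {ε : ℝ} (hε : ε ≤ 1) (t : ℝ) :
    ⨆ r ∈ Icc (0 : ℝ) ε, ∫⁻ s in Ioc (0 : ℝ) t, ∫⁻ x, ENNReal.ofReal
        ((waveKernel (Real.sqrt (ψ x)) (s + r) - waveKernel (Real.sqrt (ψ x)) s) ^ 2) ∂μ
      ≤ ENNReal.ofReal t * ∫⁻ x, ENNReal.ofReal (min (ε ^ 2) (8 / (1 + ψ x))) ∂μ := by
  refine iSup₂_le fun r hr => ?_
  have hincr : ∀ s : ℝ, |s + r - s| ≤ ε := fun s => by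
    rw [add_sub_cancel_left, abs_of_nonneg hr.1]; exact hr.2
  calc ∫⁻ s in Ioc (0 : ℝ) t, ∫⁻ x, ENNReal.ofReal
          ((waveKernel (Real.sqrt (ψ x)) (s + r) - waveKernel (Real.sqrt (ψ x)) s) ^ 2) ∂μ
      ≤ ∫⁻ _ in Ioc (0 : ℝ) t, ∫⁻ x, ENNReal.ofReal (min (ε ^ 2) (8 / (1 + ψ x))) ∂μ :=
        lintegral_mono fun s => lintegral_mono fun x =>
          ENNReal.ofReal_le_ofReal (sq_waveKernel_sub_le_min (hψ x) (hincr s) hε)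
    _ = ENNReal.ofReal t * ∫⁻ x, ENNReal.ofReal (min (ε ^ 2) (8 / (1 + ψ x))) ∂μ := by
        rw [setLIntegral_const, Real.volume_Ioc, sub_zero, mul_comm]

lemma lintegral_Ioc_zero_rpow {p : ℝ} (hp : -1 < p) {m : ℝ} (hm : 0 ≤ m) :
    ∫⁻ ε in Ioc (0 : ℝ) m, ENNReal.ofReal (ε ^ p) = ENNReal.ofReal (m ^ (p + 1) / (p + 1)) := by
  rw [← ofReal_integral_eq_lintegral_ofReal
    (intervalIntegral.intervalIntegrable_rpow' hp).1
    ((ae_restrict_iff' measurableSet_Ioc).2 (ae_of_all _ fun ε hε => Real.rpow_nonneg hε.1.le _)),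
    ← intervalIntegral.integral_of_le hm, integral_rpow (Or.inl hp),
    Real.zero_rpow (by linarith), sub_zero]

lemma lintegral_Ioi_rpow {p : ℝ} (hp : p < -1) {m : ℝ} (hm : 0 < m) :
    ∫⁻ ε in Ioi m, ENNReal.ofReal (ε ^ p) = ENNReal.ofReal (m ^ (p + 1) / (-p - 1)) := by
  rw [← ofReal_integral_eq_lintegral_ofReal (integrableOn_Ioi_rpow_of_lt hp hm)
    ((ae_restrict_iff' measurableSet_Ioi).2
      (ae_of_all _ fun ε hε => Real.rpow_nonneg (hm.trans hε).le _)),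
    integral_Ioi_rpow_of_lt hp hm, neg_div, ← div_neg, neg_add', sub_eq_add_neg]

lemma lintegral_Ioi_rpow_mul_min_sq {b : ℝ} (hb0 : 0 < b) (hb2 : b < 2) {K : ℝ} (hK : 0 < K) :
    ∫⁻ ε in Ioi 0, ENNReal.ofReal (ε ^ (-1 - b)) * ENNReal.ofReal (min (ε ^ 2) K)
      = ENNReal.ofReal ((1 / (2 - b) + 1 / b) * K ^ (1 - b / 2)) := by
  set m := Real.sqrt K
  have hm : 0 < m := Real.sqrt_pos.2 hK
  have hm2 : m ^ 2 = K := Real.sq_sqrt hK.le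
  have hsmall : EqOn (fun ε : ℝ => ENNReal.ofReal (ε ^ (-1 - b)) * ENNReal.ofReal (min (ε ^ 2) K))
      (fun ε => ENNReal.ofReal (ε ^ (1 - b))) (Ioc 0 m) := by
    intro ε ⟨hε0, hεm⟩
    have hε2 : ε ^ 2 ≤ K := hm2 ▸ pow_le_pow_left₀ hε0.le hεm 2
    simp only [min_eq_left hε2]
    rw [← ENNReal.ofReal_mul (Real.rpow_nonneg hε0.le _), ← Real.rpow_two, ← Real.rpow_add hε0]
    ring_nf
  have hlarge : EqOn (fun ε : ℝ => ENNReal.ofReal (ε ^ (-1 - b)) * ENNReal.ofReal (min (ε ^ 2) K))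
      (fun ε => ENNReal.ofReal K * ENNReal.ofReal (ε ^ (-1 - b))) (Ioi m) := by
    intro ε hε
    have hε2 : K ≤ ε ^ 2 := hm2 ▸ pow_le_pow_left₀ hm.le (le_of_lt hε) 2
    simp only [min_eq_right hε2, mul_comm]
  have hsmall_int : ∫⁻ ε in Ioc 0 m, ENNReal.ofReal (ε ^ (1 - b))
      = ENNReal.ofReal (K ^ (1 - b / 2) / (2 - b)) := by
    rw [lintegral_Ioc_zero_rpow (by linarith) hm.le, ← hm2, ← Real.rpow_two,
      ← Real.rpow_mul hm.le]
    ring_nf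
  have hlarge_int : ENNReal.ofReal K * ∫⁻ ε in Ioi m, ENNReal.ofReal (ε ^ (-1 - b))
      = ENNReal.ofReal (K ^ (1 - b / 2) / b) := by
    rw [lintegral_Ioi_rpow (by linarith) hm, ← ENNReal.ofReal_mul hK.le, ← hm2, ← Real.rpow_two,
      ← Real.rpow_mul hm.le, mul_div_assoc', ← Real.rpow_add hm]
    ring_nf
  have h2b : 0 < 2 - b := by linarith
  rw [← Ioc_union_Ioi_eq_Ioi hm.le, lintegral_union measurableSet_Ioi Ioc_disjoint_Ioi_same,
    setLIntegral_congr_fun measurableSet_Ioc hsmall, setLIntegral_congr_fun measurableSet_Ioi hlarge,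
    lintegral_const_mul' _ _ ENNReal.ofReal_ne_top, hsmall_int, hlarge_int,
    ← ENNReal.ofReal_add (by positivity) (by positivity)]
  ring_nf

lemma lintegral_Ioi_rpow_mul_lintegral_min_sq {α : Type*} [MeasurableSpace α] (μ : Measure α)
    [SFinite μ] {b : ℝ} (hb0 : 0 < b) (hb2 : b < 2) {K : α → ℝ} (hK : Measurable K)
    (hKpos : ∀ x, 0 < K x) :
    ∫⁻ ε in Ioi 0, ENNReal.ofReal (ε ^ (-1 - b)) * ∫⁻ x, ENNReal.ofReal (min (ε ^ 2) (K x)) ∂μ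
      = ENNReal.ofReal (1 / (2 - b) + 1 / b) * ∫⁻ x, ENNReal.ofReal (K x ^ (1 - b / 2)) ∂μ := by
  have hmeas : Measurable fun p : ℝ × α =>
      ENNReal.ofReal (p.1 ^ (-1 - b)) * ENNReal.ofReal (min (p.1 ^ 2) (K p.2)) := by
    fun_prop
  simp_rw [← lintegral_const_mul' _ _ ENNReal.ofReal_ne_top]
  rw [lintegral_lintegral_swap hmeas.aemeasurable]
  refine lintegral_congr fun x => ?_
  rw [lintegral_Ioi_rpow_mul_min_sq hb0 hb2 (hKpos x),
    ENNReal.ofReal_mul (by have : 0 < 2 - b := (by linarith); positivity)]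

lemma sigmaFinite_of_lintegral_ne_top {α : Type*} [MeasurableSpace α] {μ : Measure α}
    {f : α → ℝ≥0∞} (hf : Measurable f) (hf0 : ∀ x, f x ≠ 0) (hfi : ∫⁻ x, f x ∂μ ≠ ∞) :
    SigmaFinite μ := by
  -- `μ = (μ.withDensity f).withDensity f⁻¹`, and `μ.withDensity f` is finite.
  have := isFiniteMeasure_withDensity hfi
  rw [← withDensity_inv_same hf (ae_of_all _ hf0) ((ae_lt_top hf hfi).mono fun _ => ne_of_lt)]
  exact SigmaFinite.withDensity_of_ne_top' fun x => ENNReal.inv_ne_top.2 (hf0 x)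

/-- Upper bound showing `𝓘̲_H(T) ≥ 2 ind_H` for the wave kernel
`w(s,ξ) = s sinc(s √ψ(ξ))`; the constant `C` depends only on `b ∈ (0,2)`. -/
theorem stmt_16 (b : ℝ) (hb : b ∈ Ioo (0 : ℝ) 2) :
    ∃ C : ℝ, 0 < C ∧
      ∀ (d : ℕ), 1 ≤ d →
      ∀ (ψ : EuclideanSpace ℝ (Fin d) → ℝ)
        (μ : Measure (EuclideanSpace ℝ (Fin d))) (t : ℝ),
        Measurable ψ → (∀ ξ, 0 ≤ ψ ξ) → 0 < t →
        (∫⁻ ε in Ioc (0 : ℝ) 1, ENNReal.ofReal (ε ^ (-1 - b)) *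
            ⨆ r ∈ Icc (0 : ℝ) ε,
              ∫⁻ s in Ioc (0 : ℝ) t,
                ∫⁻ ξ, ENNReal.ofReal
                  (((s + r) * sinc ((s + r) * Real.sqrt (ψ ξ)) -
                      s * sinc (s * Real.sqrt (ψ ξ))) ^ 2) ∂μ) ≤
          ENNReal.ofReal (C * t) *
            ∫⁻ ξ, ENNReal.ofReal ((1 + ψ ξ) ^ (b / 2 - 1)) ∂μ := by
  obtain ⟨hb0, hb2⟩ := hb
  have h2b : 0 < 2 - b := by linarith
  refine ⟨(1 / (2 - b) + 1 / b) * 8 ^ (1 - b / 2), by positivity, ?_⟩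
  intro d _ ψ μ t hψ hψ0 _
  have h1ψ : ∀ ξ, 0 < 1 + ψ ξ := fun ξ => by linarith [hψ0 ξ]
  rcases eq_or_ne (∫⁻ ξ, ENNReal.ofReal ((1 + ψ ξ) ^ (b / 2 - 1)) ∂μ) ∞ with hI | hI
  · rw [hI, ENNReal.mul_top (ENNReal.ofReal_pos.2 (by positivity)).ne']
    exact le_top
  have : SigmaFinite μ := sigmaFinite_of_lintegral_ne_top (by fun_prop)
    (fun ξ => (ENNReal.ofReal_pos.2 (Real.rpow_pos_of_pos (h1ψ ξ) _)).ne') hI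
  have hK : ∀ ξ, (8 / (1 + ψ ξ)) ^ (1 - b / 2) = 8 ^ (1 - b / 2) * (1 + ψ ξ) ^ (b / 2 - 1) :=
    fun ξ => by
      rw [Real.div_rpow (by norm_num) (h1ψ ξ).le, div_eq_mul_inv, ← Real.rpow_neg (h1ψ ξ).le,
        neg_sub]
  calc _ ≤ ∫⁻ ε in Ioc (0 : ℝ) 1, ENNReal.ofReal (ε ^ (-1 - b)) *
          (ENNReal.ofReal t * ∫⁻ ξ, ENNReal.ofReal (min (ε ^ 2) (8 / (1 + ψ ξ))) ∂μ) :=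
        setLIntegral_mono' measurableSet_Ioc fun ε hε => by
          gcongr
          exact iSup_setLIntegral_lintegral_sq_waveKernel_sub_le μ hψ0 hε.2 t
    _ ≤ ENNReal.ofReal t * ∫⁻ ε in Ioi (0 : ℝ), ENNReal.ofReal (ε ^ (-1 - b)) *
          ∫⁻ ξ, ENNReal.ofReal (min (ε ^ 2) (8 / (1 + ψ ξ))) ∂μ := by
        simp_rw [mul_left_comm _ (ENNReal.ofReal t)]
        rw [lintegral_const_mul' _ _ ENNReal.ofReal_ne_top]
        gcongr ENNReal.ofReal t * ?_
        exact lintegral_mono_set Ioc_subset_Ioi_self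
    _ = _ := by
        rw [lintegral_Ioi_rpow_mul_lintegral_min_sq μ hb0 hb2 (by fun_prop)
          (fun ξ => div_pos (by norm_num) (h1ψ ξ))]
        simp_rw [hK, ENNReal.ofReal_mul (Real.rpow_nonneg (by norm_num : (0 : ℝ) ≤ 8) _)]
        rw [lintegral_const_mul' _ _ ENNReal.ofReal_ne_top,
          ENNReal.ofReal_mul (by positivity), ENNReal.ofReal_mul (by positivity)]
        ring
end

section
/- Let d ≥ 1, let ψ : ℝ^d → [0,∞) be measurable, let μ be a Borel measure on ℝ^d, and fix b ∈ (0,2) and t > 0. Set w(s,ξ) = s·sinc( s·√(ψ(ξ)) ) for s ≥ 0 and ξ ∈ ℝ^d, and set K(t) = max( (π/t)², 1 ). Then there exists a constant c > 0, depending only on b, such that ∫₀¹ ε^{−1−b} ( ∫₀ᵗ ∫_{ℝ^d} | w(s+ε,ξ) − w(s,ξ) |² μ(dξ) ds ) dε ≥ c·t·∫_{{ξ : ψ(ξ) ≥ 16·K(t)}} ψ(ξ)^{b/2}·(1 + ψ(ξ))^{−1} μ(dξ). -/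
open MeasureTheory Set

open Filter Topology
open scoped ENNReal

/-!
For a frequency `l = √ψ(ξ)`, the squared increment of `w` equals
`4 sin² (ε l / 2) / l² · cos² (l s + ε l / 2)`. When `l ≥ 4` and `t l ≥ 4π`, the time integral of
the `cos²` factor is at least `t / 4`, and on the window `ε ∈ [π / (2l), π / l]` one has
`sin² (ε l / 2) ≥ 1 / 2` and `ε ^ (-1 - b) ≥ (l / π) ^ (1 + b)`; integrating over this window gives
a lower bound `π ^ (-b) / 4 · t · l ^ b / (1 + l²)` for each such frequency.

Integrating this over `ξ` requires exchanging the `μ`-integral with the integrals in `ε` and `s`,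
although `μ` need not be σ-finite. The inequality `∫ dμ ∫ dν ≤ ∫ dν ∫ dμ` still holds when the
integrand is continuous in the real variable: below it sit the functions obtained by taking infima
over dyadic cells, for which the exchange is that of a countable sum with an integral, and they
converge to the integrand, so Fatou's lemma concludes.
-/

noncomputable def dyadicIndex (n : ℕ) (y : ℝ) : ℤ := ⌊y * 2 ^ n⌋

lemma measurable_dyadicIndex (n : ℕ) : Measurable (dyadicIndex n) :=
  Int.measurable_floor.comp (measurable_id.mul_const _)

lemma abs_sub_lt_of_dyadicIndex_eq {n : ℕ} {y z : ℝ} (h : dyadicIndex n z = dyadicIndex n y) :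
    |z - y| < (2 ^ n)⁻¹ := by
  have h2 : (0 : ℝ) < 2 ^ n := by positivity
  have := Int.abs_sub_lt_one_of_floor_eq_floor h
  rw [← sub_mul, abs_mul, abs_of_pos h2] at this
  simpa only [one_div] using (lt_div_iff₀ h2).2 this

lemma exists_rat_dyadicIndex_eq_mem {n : ℕ} {y : ℝ} {U : Set ℝ} (hU : U ∈ 𝓝 y) :
    ∃ q : ℚ, dyadicIndex n q = dyadicIndex n y ∧ (q : ℝ) ∈ U := by
  obtain ⟨δ, hδ, hball⟩ := Metric.mem_nhds_iff.1 hU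
  have h2 : (0 : ℝ) < 2 ^ n := by positivity
  have hcell : y < (⌊y * 2 ^ n⌋ + 1) / 2 ^ n := by
    rw [lt_div_iff₀ h2]; exact Int.lt_floor_add_one _
  obtain ⟨q, hyq, hq⟩ := exists_rat_btwn (lt_min hcell (lt_add_of_pos_right y hδ))
  refine ⟨q, Int.floor_eq_iff.2 ⟨?_, ?_⟩, hball ?_⟩
  · exact (Int.floor_le _).trans (by gcongr)
  · exact (lt_div_iff₀ h2).1 (hq.trans_le (min_le_left _ _))
  · rw [Metric.mem_ball, Real.dist_eq, abs_lt]
    constructor <;> linarith [min_le_right ((⌊y * 2 ^ n⌋ + 1 : ℝ) / 2 ^ n) (y + δ)]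

-- Only rational points are used, so that the infimum is measurable in a parameter of `f`.
noncomputable def dyadicCellInf (f : ℝ → ℝ≥0∞) (n : ℕ) (j : ℤ) : ℝ≥0∞ :=
  ⨅ (q : ℚ) (_ : dyadicIndex n q = j), f q

section DyadicCellInf

variable {f : ℝ → ℝ≥0∞} {y : ℝ}

lemma dyadicCellInf_le (hf : ContinuousAt f y) (n : ℕ) :
    dyadicCellInf f n (dyadicIndex n y) ≤ f y := by
  by_contra! hlt
  obtain ⟨q, hq, hqU⟩ :=
    exists_rat_dyadicIndex_eq_mem (n := n) (hf.preimage_mem_nhds (Iio_mem_nhds hlt))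
  exact (iInf₂_le (f := fun (q : ℚ) (_ : dyadicIndex n q = dyadicIndex n y) => f q) q hq).not_gt hqU

lemma tendsto_dyadicCellInf (hf : ContinuousAt f y) :
    Tendsto (fun n => dyadicCellInf f n (dyadicIndex n y)) atTop (𝓝 (f y)) := by
  refine tendsto_order.2 ⟨fun a ha => ?_, fun a ha =>
    Eventually.of_forall fun n => (dyadicCellInf_le hf n).trans_lt ha⟩
  obtain ⟨a', haa', ha'⟩ := exists_between ha
  obtain ⟨δ, hδ, hball⟩ := Metric.mem_nhds_iff.1 (hf.preimage_mem_nhds (Ioi_mem_nhds ha'))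
  have hsmall : ∀ᶠ n : ℕ in atTop, ((2 : ℝ) ^ n)⁻¹ < δ :=
    (tendsto_inv_atTop_zero.comp (tendsto_pow_atTop_atTop_of_one_lt one_lt_two)).eventually
      (gt_mem_nhds hδ)
  filter_upwards [hsmall] with n hn
  refine haa'.trans_le (le_iInf₂ fun q hq => (hball ?_).le)
  rw [Metric.mem_ball, Real.dist_eq]
  exact (abs_sub_lt_of_dyadicIndex_eq hq).trans hn

end DyadicCellInf

section CountablyValued

variable {X Y ι : Type*} [MeasurableSpace X] [MeasurableSpace Y] [MeasurableSpace ι] [Countable ι]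
  [MeasurableSingletonClass ι] {μ : Measure X} {ν : Measure Y} {φ : Y → ι}

lemma lintegral_comp_eq_tsum (hφ : Measurable φ) (g : ι → ℝ≥0∞) :
    ∫⁻ y, g (φ y) ∂ν = ∑' i, g i * ν.map φ {i} := by
  rw [← lintegral_map (measurable_of_countable g) hφ, lintegral_countable']

lemma measurable_lintegral_comp (hφ : Measurable φ) {G : ι → X → ℝ≥0∞}
    (hG : ∀ i, Measurable (G i)) : Measurable fun x => ∫⁻ y, G (φ y) x ∂ν := by
  have h x : ∫⁻ y, G (φ y) x ∂ν = ∑' i, G i x * ν.map φ {i} :=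
    lintegral_comp_eq_tsum hφ fun i => G i x
  simp only [h]
  exact Measurable.tsum fun i => (hG i).mul_const _

theorem lintegral_lintegral_comp_swap (hφ : Measurable φ) {G : ι → X → ℝ≥0∞}
    (hG : ∀ i, Measurable (G i)) :
    ∫⁻ x, ∫⁻ y, G (φ y) x ∂ν ∂μ = ∫⁻ y, ∫⁻ x, G (φ y) x ∂μ ∂ν := by
  have h x : ∫⁻ y, G (φ y) x ∂ν = ∑' i, G i x * ν.map φ {i} :=
    lintegral_comp_eq_tsum hφ fun i => G i x
  simp only [h, lintegral_comp_eq_tsum hφ fun i => ∫⁻ x, G i x ∂μ]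
  rw [lintegral_tsum fun i => ((hG i).mul_const _).aemeasurable]
  simp only [lintegral_mul_const _ (hG _)]

end CountablyValued

theorem lintegral_lintegral_le_of_continuousAt {X : Type*} [MeasurableSpace X] {μ : Measure X}
    {ν : Measure ℝ} {F : X → ℝ → ℝ≥0∞} (hFc : ∀ᵐ y ∂ν, ∀ x, ContinuousAt (F x) y)
    (hFm : ∀ y, Measurable fun x => F x y) :
    ∫⁻ x, ∫⁻ y, F x y ∂ν ∂μ ≤ ∫⁻ y, ∫⁻ x, F x y ∂μ ∂ν := by
  set c : ℕ → ℤ → X → ℝ≥0∞ := fun n j x => dyadicCellInf (F x) n j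
  have hc : ∀ n j, Measurable (c n j) := fun n j =>
    Measurable.iInf fun q => Measurable.iInf fun _ => hFm q
  calc ∫⁻ x, ∫⁻ y, F x y ∂ν ∂μ
      = ∫⁻ x, ∫⁻ y, liminf (fun n => c n (dyadicIndex n y) x) atTop ∂ν ∂μ := by
        refine lintegral_congr fun x => lintegral_congr_ae ?_
        filter_upwards [hFc] with y hy using ((tendsto_dyadicCellInf (hy x)).liminf_eq).symm
    _ ≤ ∫⁻ x, liminf (fun n => ∫⁻ y, c n (dyadicIndex n y) x ∂ν) atTop ∂μ :=
        lintegral_mono fun x => lintegral_liminf_le fun n =>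
          (measurable_of_countable fun j => c n j x).comp (measurable_dyadicIndex n)
    _ ≤ liminf (fun n => ∫⁻ x, ∫⁻ y, c n (dyadicIndex n y) x ∂ν ∂μ) atTop :=
        lintegral_liminf_le fun n => measurable_lintegral_comp (measurable_dyadicIndex n) (hc n)
    _ ≤ ∫⁻ y, ∫⁻ x, F x y ∂μ ∂ν := by
        refine liminf_le_of_le (by isBoundedDefault) fun a ha => ?_
        obtain ⟨n, hn⟩ := ha.exists
        rw [lintegral_lintegral_comp_swap (measurable_dyadicIndex n) (hc n)] at hn
        refine hn.trans (lintegral_mono_ae ?_)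
        filter_upwards [hFc] with y hy
        exact lintegral_mono fun x => dyadicCellInf_le (hy x) n

-- `(w (s + ε, ξ) - w (s, ξ)) ^ 2` with `l = √ψ(ξ)`
noncomputable def waveIncrSq (l ε s : ℝ) : ℝ :=
  ((s + ε) * sinc ((s + ε) * l) - s * sinc (s * l)) ^ 2

lemma continuous_waveIncrSq : Continuous fun p : ℝ × ℝ × ℝ => waveIncrSq p.1 p.2.1 p.2.2 := by
  have : sinc = Real.sinc := rfl
  simp only [waveIncrSq, this]
  fun_prop

lemma mul_sinc_mul {l : ℝ} (hl : l ≠ 0) (u : ℝ) : u * sinc (u * l) = Real.sin (u * l) / l := by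
  rcases eq_or_ne u 0 with rfl | hu
  · simp
  · rw [sinc, if_neg (mul_ne_zero hu hl)]
    field_simp

lemma waveIncrSq_eq {l : ℝ} (hl : l ≠ 0) (ε s : ℝ) :
    waveIncrSq l ε s = 4 * Real.sin (ε * l / 2) ^ 2 / l ^ 2 * Real.cos (l * s + ε * l / 2) ^ 2 := by
  rw [waveIncrSq, mul_sinc_mul hl, mul_sinc_mul hl, div_sub_div_same, Real.sin_sub_sin]
  rw [show ((s + ε) * l - s * l) / 2 = ε * l / 2 by ring,
    show ((s + ε) * l + s * l) / 2 = l * s + ε * l / 2 by ring]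
  field_simp
  ring

open Real in
lemma sub_inv_le_integral_cos_sq {l : ℝ} (hl : 0 < l) (d t : ℝ) :
    t / 2 - 1 / l ≤ ∫ s in (0 : ℝ)..t, cos (l * s + d) ^ 2 := by
  rw [intervalIntegral.integral_comp_mul_add (fun u => cos u ^ 2) hl.ne' d, integral_cos_sq,
    smul_eq_mul]
  have hcs x : |cos x * sin x| ≤ 1 / 2 := by
    rw [abs_le]; constructor <;> nlinarith [sin_sq_add_cos_sq x, sq_nonneg (cos x + sin x),
      sq_nonneg (cos x - sin x)]
  have hdiff := abs_le.1 ((abs_sub _ _).trans (add_le_add (hcs (l * t + d)) (hcs (l * 0 + d))))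
  rw [show t / 2 - 1 / l = l⁻¹ * ((l * t - 2) / 2) by field_simp]
  exact mul_le_mul_of_nonneg_left (by linarith) (inv_nonneg.2 hl.le)

open Real in
lemma le_intervalIntegral_waveIncrSq {l t : ℝ} (hl : 0 < l) (hlt : 4 * π ≤ t * l) (ε : ℝ) :
    t * sin (ε * l / 2) ^ 2 / l ^ 2 ≤ ∫ s in (0 : ℝ)..t, waveIncrSq l ε s := by
  have hinv : 1 / l ≤ t / 4 := by
    rw [div_le_div_iff₀ hl (by norm_num)]; linarith [pi_gt_three]
  simp only [waveIncrSq_eq hl.ne', intervalIntegral.integral_const_mul]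
  calc t * sin (ε * l / 2) ^ 2 / l ^ 2 = 4 * sin (ε * l / 2) ^ 2 / l ^ 2 * (t / 4) := by ring
    _ ≤ 4 * sin (ε * l / 2) ^ 2 / l ^ 2 * (t / 2 - 1 / l) := by gcongr; linarith
    _ ≤ _ := by gcongr; exact sub_inv_le_integral_cos_sq hl _ t

lemma lintegral_Ioc_waveIncrSq {t : ℝ} (ht : 0 ≤ t) (l ε : ℝ) :
    ∫⁻ s in Ioc 0 t, ENNReal.ofReal (waveIncrSq l ε s) =
      ENNReal.ofReal (∫ s in (0 : ℝ)..t, waveIncrSq l ε s) := by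
  have hcont : Continuous (waveIncrSq l ε) :=
    continuous_waveIncrSq.comp (by fun_prop : Continuous fun s : ℝ => (l, ε, s))
  rw [intervalIntegral.integral_of_le ht, ofReal_integral_eq_lintegral_ofReal
    hcont.integrableOn_Ioc (Eventually.of_forall fun s => sq_nonneg _)]

lemma continuous_lintegral_Ioc_waveIncrSq {t : ℝ} (ht : 0 ≤ t) :
    Continuous fun p : ℝ × ℝ => ∫⁻ s in Ioc 0 t, ENNReal.ofReal (waveIncrSq p.1 p.2 s) := by
  have h : Continuous (Function.uncurry fun (p : ℝ × ℝ) (s : ℝ) => waveIncrSq p.1 p.2 s) :=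
    continuous_waveIncrSq.comp (f := fun q : (ℝ × ℝ) × ℝ => (q.1.1, q.1.2, q.2)) (by fun_prop)
  simp only [lintegral_Ioc_waveIncrSq ht]
  exact ENNReal.continuous_ofReal.comp
    (intervalIntegral.continuous_parametric_intervalIntegral_of_continuous' h 0 t)

open Real in
lemma half_le_sin_sq {x : ℝ} (h₁ : π / 4 ≤ x) (h₂ : x ≤ π / 2) : 1 / 2 ≤ sin x ^ 2 := by
  have : cos (2 * x) ≤ 0 := cos_nonpos_of_pi_div_two_le_of_le (by linarith) (by linarith)
  rw [sin_sq_eq_half_sub]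
  linarith

open Real in
lemma pi_div_rpow_neg_one_sub {b l : ℝ} (hl : 0 < l) :
    (π / l) ^ (-1 - b) = π ^ (-b) * l ^ b * (l / π) := by
  rw [show -1 - b = -b + -1 by ring, rpow_add (div_pos pi_pos hl), rpow_neg_one, inv_div,
    div_rpow pi_pos.le hl.le, rpow_neg hl.le, div_inv_eq_mul]

open Real in
lemma ofReal_mul_le_lintegral_waveIncrSq {b l t : ℝ} (hb : -1 ≤ b) (hl : 4 ≤ l)
    (hlt : 4 * π ≤ t * l) :
    ENNReal.ofReal (π ^ (-b) / 4 * t) * ENNReal.ofReal (l ^ b / (1 + l ^ 2)) ≤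
      ∫⁻ ε in Ioc 0 1, ENNReal.ofReal (ε ^ (-1 - b)) *
        ∫⁻ s in Ioc 0 t, ENNReal.ofReal (waveIncrSq l ε s) := by
  have hl0 : 0 < l := by linarith
  have ht : 0 < t := pos_of_mul_pos_left (by linarith [pi_pos]) hl0.le
  set C := (π / l) ^ (-1 - b) * (t / (2 * l ^ 2))
  have hW : Icc (π / (2 * l)) (π / l) ⊆ Ioc 0 1 := fun ε hε =>
    ⟨(by positivity : (0 : ℝ) < π / (2 * l)).trans_le hε.1,
      hε.2.trans ((div_le_one hl0).2 (by linarith [pi_le_four]))⟩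
  have hC : ∀ ε ∈ Icc (π / (2 * l)) (π / l), ENNReal.ofReal C ≤
      ENNReal.ofReal (ε ^ (-1 - b)) * ∫⁻ s in Ioc 0 t, ENNReal.ofReal (waveIncrSq l ε s) := by
    intro ε hε
    have hε0 : 0 < ε := (hW hε).1
    have hsin : 1 / 2 ≤ sin (ε * l / 2) ^ 2 := by
      refine half_le_sin_sq ?_ ?_
      · have := (div_le_iff₀ (by positivity)).1 hε.1; linarith
      · have := (le_div_iff₀ hl0).1 hε.2; linarith
    rw [lintegral_Ioc_waveIncrSq ht.le, ← ENNReal.ofReal_mul (rpow_nonneg hε0.le _)]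
    refine ENNReal.ofReal_le_ofReal (mul_le_mul (rpow_le_rpow_of_nonpos hε0 hε.2 (by linarith))
      ?_ (by positivity) (rpow_nonneg hε0.le _))
    refine le_trans ?_ (le_intervalIntegral_waveIncrSq hl0 hlt ε)
    calc t / (2 * l ^ 2) = t * (1 / 2) / l ^ 2 := by ring
      _ ≤ _ := by gcongr
  calc ENNReal.ofReal (π ^ (-b) / 4 * t) * ENNReal.ofReal (l ^ b / (1 + l ^ 2))
      ≤ ENNReal.ofReal C * volume (Icc (π / (2 * l)) (π / l)) := by
        rw [Real.volume_Icc, ← ENNReal.ofReal_mul (by positivity),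
          ← ENNReal.ofReal_mul (by positivity)]
        refine ENNReal.ofReal_le_ofReal ?_
        have hpi := pi_pos
        rw [show C * (π / l - π / (2 * l)) = π ^ (-b) / 4 * t * (l ^ b / l ^ 2) by
          simp only [C, pi_div_rpow_neg_one_sub hl0]; field_simp; ring]
        gcongr
        linarith
    _ = ∫⁻ _ in Icc (π / (2 * l)) (π / l), ENNReal.ofReal C := (setLIntegral_const _ _).symm
    _ ≤ _ := setLIntegral_mono' measurableSet_Icc hC
    _ ≤ _ := lintegral_mono_set hW

open Real in
lemma four_le_sqrt_and_four_pi_le {t x : ℝ} (ht : 0 < t) (hx : 16 * max ((π / t) ^ 2) 1 ≤ x) :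
    4 ≤ √x ∧ 4 * π ≤ t * √x := by
  have h16 : (16 : ℝ) ≤ 16 * max ((π / t) ^ 2) 1 := by linarith [le_max_right ((π / t) ^ 2) 1]
  have hpi : 16 * (π / t) ^ 2 ≤ 16 * max ((π / t) ^ 2) 1 := by
    linarith [le_max_left ((π / t) ^ 2) 1]
  refine ⟨le_sqrt_of_sq_le (by linarith), ?_⟩
  calc 4 * π = t * (4 * (π / t)) := by field_simp
    _ ≤ t * √x := by gcongr; exact le_sqrt_of_sq_le (by linarith)

theorem lintegral_lintegral_waveIncrSq_le {X : Type*} [MeasurableSpace X] {μ : Measure X}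
    {L : X → ℝ} (hL : Measurable L) (b : ℝ) {t : ℝ} (ht : 0 ≤ t) :
    ∫⁻ x, (∫⁻ ε in Ioc 0 1, ENNReal.ofReal (ε ^ (-1 - b)) *
        ∫⁻ s in Ioc 0 t, ENNReal.ofReal (waveIncrSq (L x) ε s)) ∂μ ≤
      ∫⁻ ε in Ioc 0 1, ENNReal.ofReal (ε ^ (-1 - b)) *
        ∫⁻ s in Ioc 0 t, ∫⁻ x, ENNReal.ofReal (waveIncrSq (L x) ε s) ∂μ := by
  have hI := continuous_lintegral_Ioc_waveIncrSq ht
  calc _ ≤ ∫⁻ ε in Ioc 0 1, ∫⁻ x, ENNReal.ofReal (ε ^ (-1 - b)) *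
          (∫⁻ s in Ioc 0 t, ENNReal.ofReal (waveIncrSq (L x) ε s)) ∂μ := by
        refine lintegral_lintegral_le_of_continuousAt ?_ fun ε => measurable_const.mul
          ((hI.comp (continuous_id.prodMk continuous_const)).measurable.comp hL)
        filter_upwards [ae_restrict_mem measurableSet_Ioc] with ε hε x
        exact ENNReal.Tendsto.mul (ENNReal.continuous_ofReal.continuousAt.comp
            (Real.continuousAt_rpow_const _ _ (Or.inl hε.1.ne')))
          (Or.inl (ENNReal.ofReal_pos.2 (Real.rpow_pos_of_pos hε.1 _)).ne')
          (hI.comp (continuous_const.prodMk continuous_id)).continuousAt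
          (Or.inr ENNReal.ofReal_ne_top)
    _ = ∫⁻ ε in Ioc 0 1, ENNReal.ofReal (ε ^ (-1 - b)) *
          ∫⁻ x, (∫⁻ s in Ioc 0 t, ENNReal.ofReal (waveIncrSq (L x) ε s)) ∂μ :=
        lintegral_congr fun ε => lintegral_const_mul' _ _ ENNReal.ofReal_ne_top
    _ ≤ _ := by
        gcongr with ε
        refine lintegral_lintegral_le_of_continuousAt (Eventually.of_forall fun s x => ?_)
          fun s => ?_
        · exact (ENNReal.continuous_ofReal.comp (continuous_waveIncrSq.comp
            (by fun_prop : Continuous fun s : ℝ => (L x, ε, s)))).continuousAt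
        · exact ENNReal.measurable_ofReal.comp (continuous_waveIncrSq.measurable.comp
            (hL.prodMk (measurable_const.prodMk measurable_const)))

/-- Lower bound showing `𝓘̄_H(T) ≤ 2 ind_H` for the wave kernel
`w(s,ξ) = s sinc(s √ψ(ξ))`; the constant `c` depends only on `b ∈ (0,2)`. -/
theorem stmt_17 (b : ℝ) (hb : b ∈ Ioo (0 : ℝ) 2) :
    ∃ c : ℝ, 0 < c ∧
      ∀ (d : ℕ), 1 ≤ d →
      ∀ (ψ : EuclideanSpace ℝ (Fin d) → ℝ)
        (μ : Measure (EuclideanSpace ℝ (Fin d))) (t : ℝ),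
        Measurable ψ → (∀ ξ, 0 ≤ ψ ξ) → 0 < t →
        ENNReal.ofReal (c * t) *
            (∫⁻ ξ in {ξ : EuclideanSpace ℝ (Fin d) |
                16 * max ((Real.pi / t) ^ 2) 1 ≤ ψ ξ},
              ENNReal.ofReal (ψ ξ ^ (b / 2) / (1 + ψ ξ)) ∂μ) ≤
          ∫⁻ ε in Ioc (0 : ℝ) 1, ENNReal.ofReal (ε ^ (-1 - b)) *
            ∫⁻ s in Ioc (0 : ℝ) t,
              ∫⁻ ξ, ENNReal.ofReal
                (((s + ε) * sinc ((s + ε) * Real.sqrt (ψ ξ)) -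
                    s * sinc (s * Real.sqrt (ψ ξ))) ^ 2) ∂μ := by
  refine ⟨Real.pi ^ (-b) / 4, by positivity, fun d _ ψ μ t hψ hψ0 ht => ?_⟩
  set A := {ξ | 16 * max ((Real.pi / t) ^ 2) 1 ≤ ψ ξ}
  calc _ = ∫⁻ ξ in A, ENNReal.ofReal (Real.pi ^ (-b) / 4 * t) *
          ENNReal.ofReal (√(ψ ξ) ^ b / (1 + √(ψ ξ) ^ 2)) ∂μ := by
        rw [← lintegral_const_mul' _ _ ENNReal.ofReal_ne_top]
        refine lintegral_congr fun ξ => ?_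
        rw [Real.sq_sqrt (hψ0 ξ), Real.sqrt_eq_rpow, ← Real.rpow_mul (hψ0 ξ), one_div_mul_eq_div]
    _ ≤ ∫⁻ ξ in A, (∫⁻ ε in Ioc 0 1, ENNReal.ofReal (ε ^ (-1 - b)) *
          ∫⁻ s in Ioc 0 t, ENNReal.ofReal (waveIncrSq √(ψ ξ) ε s)) ∂μ :=
        setLIntegral_mono' (measurableSet_le measurable_const hψ) fun ξ hξ =>
          ofReal_mul_le_lintegral_waveIncrSq (by linarith [hb.1])
            (four_le_sqrt_and_four_pi_le ht hξ).1 (four_le_sqrt_and_four_pi_le ht hξ).2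
    _ ≤ ∫⁻ ε in Ioc 0 1, ENNReal.ofReal (ε ^ (-1 - b)) *
          ∫⁻ s in Ioc 0 t, ∫⁻ ξ in A, ENNReal.ofReal (waveIncrSq √(ψ ξ) ε s) ∂μ :=
        lintegral_lintegral_waveIncrSq_le hψ.sqrt b ht.le
    _ ≤ _ := by
        gcongr
        · exact Measure.restrict_le_self
        · rfl
end

section
/- Define ψ : ℝ → ℝ by ψ(ξ) = 2·∫₀^{1/e} (1 − cos(ξx))·log(1/x)·x^{−1} dx. Then: (i) ψ(ξ) > 0 for every ξ ≠ 0; and (ii) there exist constants 0 < c₁ ≤ c₂ such that c₁·(log ξ)² ≤ ψ(ξ) ≤ c₂·(log ξ)² for every ξ ≥ e². -/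
open MeasureTheory Set

/-!
Near the origin the integrand is comparable to `ξ² x log(1/x)`, because `1 - cos t ≍ t²`
for `|t| ≤ π`; integrating over `(0, a)` with `|ξ| a ≤ π` gives positivity and a lower bound
of order `log ξ`. The `(log ξ)²` growth comes from the density `w x = log(1/x)/x`, which is
decreasing: a shift by half a period `h = π/ξ` turns `1 - cos (ξx)` into `1 + cos (ξx)`, so
adding the integrals of the integrand over `[0, b - h]` and `[h, b]` gives
`2 ∫₀ᵇ ≥ 2 ∫ₕᵇ w = log² h - log² b`.
The upper bound uses `1 - cos t ≤ min (t²/2) 2`, splitting the integral at `x = 1/ξ`.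
-/

open Real

namespace LogLevy

noncomputable def levyDensity (x : ℝ) : ℝ := log (1 / x) / x

noncomputable def psiIntegrand (ξ x : ℝ) : ℝ := (1 - cos (ξ * x)) * levyDensity x

noncomputable def psi (ξ : ℝ) : ℝ := 2 * ∫ x in Ioo 0 (exp 1)⁻¹, psiIntegrand ξ x

lemma mul_log_one_div_le {x a : ℝ} (hx : 0 < x) (hxa : x ≤ a) (ha : a ≤ 1) :
    x * log (1 / x) ≤ a * log (1 / a) + a := by
  have ha0 : 0 < a := hx.trans_le hxa
  have hsplit : log (1 / x) = log (1 / a) + log (a / x) := by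
    rw [← log_mul (by positivity) (by positivity)]
    congr 1
    field_simp
  have hfar : x * log (1 / a) ≤ a * log (1 / a) :=
    mul_le_mul_of_nonneg_right hxa (log_nonneg (one_le_one_div ha0 ha))
  have hnear : x * log (a / x) ≤ a :=
    calc x * log (a / x) ≤ x * (a / x - 1) :=
          mul_le_mul_of_nonneg_left (log_le_sub_one_of_pos (by positivity)) hx.le
      _ = a - x := by field_simp
      _ ≤ a := by linarith
  rw [hsplit, mul_add]
  linarith

lemma levyDensity_nonneg {x : ℝ} (hx : 0 < x) (hx1 : x ≤ 1) : 0 ≤ levyDensity x :=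
  div_nonneg (log_nonneg (one_le_one_div hx hx1)) hx.le

lemma levyDensity_antitoneOn : AntitoneOn levyDensity (Ioc 0 1) := fun _ hx _ hy hxy =>
  div_le_div₀ (log_nonneg (one_le_one_div hx.1 hx.2))
    (log_le_log (one_div_pos.2 hy.1) (one_div_le_one_div_of_le hx.1 hxy)) hx.1 hxy

lemma continuousOn_levyDensity : ContinuousOn levyDensity (Ioi 0) := by
  unfold levyDensity
  fun_prop (disch := simp_all [ne_of_gt])

lemma intervalIntegrable_levyDensity {a b : ℝ} (ha : 0 < a) (hb : 0 < b) :
    IntervalIntegrable levyDensity volume a b :=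
  (continuousOn_levyDensity.mono fun _ hx => (lt_min ha hb).trans_le hx.1).intervalIntegrable

lemma integral_levyDensity {a b : ℝ} (ha : 0 < a) (hb : 0 < b) :
    ∫ x in a..b, levyDensity x = (log a ^ 2 - log b ^ 2) / 2 := by
  have hderiv : ∀ x ∈ uIcc a b, HasDerivAt (fun y => -(log y ^ 2) / 2) (levyDensity x) x := by
    intro x hx
    have hx0 : 0 < x := (lt_min ha hb).trans_le hx.1
    refine (((hasDerivAt_log hx0.ne').fun_pow 2).fun_neg.div_const 2).congr_deriv ?_
    simp only [levyDensity, one_div, log_inv]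
    field_simp
    ring
  rw [intervalIntegral.integral_eq_sub_of_hasDerivAt hderiv
    (intervalIntegrable_levyDensity ha hb)]
  ring

lemma psiIntegrand_nonneg (ξ : ℝ) {x : ℝ} (hx : 0 < x) (hx1 : x ≤ 1) : 0 ≤ psiIntegrand ξ x :=
  mul_nonneg (sub_nonneg.2 (cos_le_one _)) (levyDensity_nonneg hx hx1)

lemma psiIntegrand_le_sq_mul (ξ : ℝ) {x : ℝ} (hx : 0 < x) (hx1 : x ≤ 1) :
    psiIntegrand ξ x ≤ ξ ^ 2 / 2 * (x * log (1 / x)) :=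
  calc psiIntegrand ξ x ≤ (ξ * x) ^ 2 / 2 * levyDensity x :=
        mul_le_mul_of_nonneg_right (by linarith [one_sub_sq_div_two_le_cos (x := ξ * x)])
          (levyDensity_nonneg hx hx1)
    _ = ξ ^ 2 / 2 * (x * log (1 / x)) := by
        unfold levyDensity
        field_simp

lemma psiIntegrand_le_two_mul (ξ : ℝ) {x : ℝ} (hx : 0 < x) (hx1 : x ≤ 1) :
    psiIntegrand ξ x ≤ 2 * levyDensity x :=
  mul_le_mul_of_nonneg_right (by linarith [neg_one_le_cos (ξ * x)]) (levyDensity_nonneg hx hx1)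

lemma intervalIntegrable_psiIntegrand (ξ : ℝ) {a b : ℝ} (ha : 0 ≤ a) (hab : a ≤ b)
    (hb : b ≤ 1) :
    IntervalIntegrable (psiIntegrand ξ) volume a b := by
  have hmeas : Measurable (psiIntegrand ξ) := by
    unfold psiIntegrand levyDensity
    fun_prop
  have h01 : IntervalIntegrable (psiIntegrand ξ) volume 0 1 := by
    refine (intervalIntegrable_const (c := ξ ^ 2 / 2)).mono_fun' hmeas.aestronglyMeasurable ?_
    rw [uIoc_of_le zero_le_one]
    filter_upwards [ae_restrict_mem measurableSet_Ioc] with x hx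
    rw [Real.norm_of_nonneg (psiIntegrand_nonneg ξ hx.1 hx.2)]
    calc psiIntegrand ξ x ≤ ξ ^ 2 / 2 * (x * log (1 / x)) := psiIntegrand_le_sq_mul ξ hx.1 hx.2
      _ ≤ ξ ^ 2 / 2 * 1 := by
          gcongr
          simpa using mul_log_one_div_le hx.1 hx.2 le_rfl
      _ = ξ ^ 2 / 2 := mul_one _
  refine h01.mono_set ?_
  rw [uIcc_of_le hab, uIcc_of_le zero_le_one]
  exact Icc_subset_Icc ha hb

lemma integral_psiIntegrand_mono_interval (ξ : ℝ) {a b c d : ℝ} (hc : 0 ≤ c) (hca : c ≤ a)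
    (hab : a ≤ b) (hbd : b ≤ d) (hd : d ≤ 1) :
    ∫ x in a..b, psiIntegrand ξ x ≤ ∫ x in c..d, psiIntegrand ξ x := by
  refine intervalIntegral.integral_mono_interval hca hab hbd ?_
    (intervalIntegrable_psiIntegrand ξ hc (hca.trans (hab.trans hbd)) hd)
  filter_upwards [ae_restrict_mem measurableSet_Ioc] with x hx
  exact psiIntegrand_nonneg ξ (hc.trans_lt hx.1) (hx.2.trans hd)

lemma integral_psiIntegrand_zero_le (ξ : ℝ) {a : ℝ} (ha : 0 < a) (ha1 : a ≤ 1) :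
    ∫ x in 0..a, psiIntegrand ξ x ≤ ξ ^ 2 * a * (a * log (1 / a) + a) / 2 :=
  calc ∫ x in 0..a, psiIntegrand ξ x ≤ ∫ _ in 0..a, ξ ^ 2 / 2 * (a * log (1 / a) + a) := by
        refine intervalIntegral.integral_mono_on_of_le_Ioo ha.le
          (intervalIntegrable_psiIntegrand ξ le_rfl ha.le ha1) intervalIntegrable_const
          fun x hx => (psiIntegrand_le_sq_mul ξ hx.1 (hx.2.le.trans ha1)).trans ?_
        gcongr
        exact mul_log_one_div_le hx.1 hx.2.le ha1
    _ = ξ ^ 2 * a * (a * log (1 / a) + a) / 2 := by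
        simp only [intervalIntegral.integral_const, smul_eq_mul]
        ring

lemma integral_psiIntegrand_le_sq_log (ξ : ℝ) {a b : ℝ} (ha : 0 < a) (hab : a ≤ b)
    (hb : b ≤ 1) :
    ∫ x in a..b, psiIntegrand ξ x ≤ log a ^ 2 - log b ^ 2 :=
  calc ∫ x in a..b, psiIntegrand ξ x ≤ ∫ x in a..b, 2 * levyDensity x :=
        intervalIntegral.integral_mono_on hab (intervalIntegrable_psiIntegrand ξ ha.le hab hb)
          ((intervalIntegrable_levyDensity ha (ha.trans_le hab)).const_mul 2)
          fun x hx => psiIntegrand_le_two_mul ξ (ha.trans_le hx.1) (hx.2.trans hb)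
    _ = log a ^ 2 - log b ^ 2 := by
        rw [intervalIntegral.integral_const_mul, integral_levyDensity ha (ha.trans_le hab)]
        ring

lemma integral_psiIntegrand_zero_ge {ξ a : ℝ} (ha : 0 < a) (ha1 : a ≤ 1)
    (hξa : |ξ| * a ≤ π) :
    ξ ^ 2 * a ^ 2 / π ^ 2 * log (1 / a) ≤ ∫ x in 0..a, psiIntegrand ξ x :=
  calc ξ ^ 2 * a ^ 2 / π ^ 2 * log (1 / a)
        = ∫ x in 0..a, 2 / π ^ 2 * ξ ^ 2 * log (1 / a) * x := by
          rw [intervalIntegral.integral_const_mul, integral_id]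
          ring
    _ ≤ ∫ x in 0..a, psiIntegrand ξ x := by
          refine intervalIntegral.integral_mono_on_of_le_Ioo ha.le
            (intervalIntegral.intervalIntegrable_id.const_mul _)
            (intervalIntegrable_psiIntegrand ξ le_rfl ha.le ha1) fun x hx => ?_
          have hcos : 2 / π ^ 2 * (ξ * x) ^ 2 ≤ 1 - cos (ξ * x) := by
            have : |ξ * x| ≤ π := by
              rw [abs_mul, abs_of_pos hx.1]
              exact (mul_le_mul_of_nonneg_left hx.2.le (abs_nonneg ξ)).trans hξa
            linarith [cos_le_one_sub_mul_cos_sq this]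
          have hlog : log (1 / a) / x ≤ levyDensity x :=
            div_le_div_of_nonneg_right
              (log_le_log (one_div_pos.2 ha) (one_div_le_one_div_of_le hx.1 hx.2.le)) hx.1.le
          calc 2 / π ^ 2 * ξ ^ 2 * log (1 / a) * x
              = 2 / π ^ 2 * (ξ * x) ^ 2 * (log (1 / a) / x) := by
                field_simp
            _ ≤ psiIntegrand ξ x :=
                mul_le_mul hcos hlog
                  (div_nonneg (log_nonneg (one_le_one_div ha ha1)) hx.1.le)
                  (sub_nonneg.2 (cos_le_one _))

lemma two_mul_levyDensity_le_psiIntegrand_add {ξ x : ℝ} (hξ : 0 < ξ) (hx : 0 < x)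
    (hx1 : x + π / ξ ≤ 1) :
    2 * levyDensity (x + π / ξ) ≤ psiIntegrand ξ x + psiIntegrand ξ (x + π / ξ) := by
  have hh : 0 < π / ξ := by positivity
  have hcos : cos (ξ * (x + π / ξ)) = -cos (ξ * x) := by
    rw [mul_add, mul_div_cancel₀ _ hξ.ne', cos_add_pi]
  have hmono :
      (1 - cos (ξ * x)) * levyDensity (x + π / ξ) ≤ (1 - cos (ξ * x)) * levyDensity x :=
    mul_le_mul_of_nonneg_left
      (levyDensity_antitoneOn ⟨hx, by linarith⟩ ⟨by positivity, hx1⟩ (by linarith))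
      (sub_nonneg.2 (cos_le_one _))
  unfold psiIntegrand
  rw [hcos]
  linarith

theorem integral_levyDensity_le_integral_psiIntegrand {ξ b : ℝ} (hξ : 0 < ξ) (hb : π / ξ ≤ b)
    (hb1 : b ≤ 1) : ∫ x in π / ξ..b, levyDensity x ≤ ∫ x in 0..b, psiIntegrand ξ x := by
  set h := π / ξ
  have hh : 0 < h := by positivity
  have hshift : ∫ x in 0..b - h, psiIntegrand ξ (x + h) = ∫ x in h..b, psiIntegrand ξ x := by
    simp [intervalIntegral.integral_comp_add_right]
  have hw : ∫ x in 0..b - h, levyDensity (x + h) = ∫ x in h..b, levyDensity x := by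
    simp [intervalIntegral.integral_comp_add_right]
  have hpair : 2 * ∫ x in h..b, levyDensity x ≤
      (∫ x in 0..b - h, psiIntegrand ξ x) + ∫ x in h..b, psiIntegrand ξ x := by
    have hf := intervalIntegrable_psiIntegrand ξ le_rfl (by linarith : 0 ≤ b - h) (by linarith)
    have hf' := (intervalIntegrable_psiIntegrand ξ hh.le hb hb1).comp_add_right h
    have hw' := (intervalIntegrable_levyDensity hh (hh.trans_le hb)).comp_add_right h
    rw [sub_self] at hf' hw'
    rw [← hw, ← hshift, ← intervalIntegral.integral_const_mul,
      ← intervalIntegral.integral_add hf hf']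
    exact intervalIntegral.integral_mono_on_of_le_Ioo (by linarith) (hw'.const_mul 2)
      (hf.add hf') fun x hx =>
        two_mul_levyDensity_le_psiIntegrand_add hξ hx.1 (by linarith [hx.2])
  have hleft := integral_psiIntegrand_mono_interval ξ le_rfl le_rfl (by linarith : 0 ≤ b - h)
    (by linarith) hb1
  have hright := integral_psiIntegrand_mono_interval ξ le_rfl hh.le hb le_rfl hb1
  linarith

lemma exp_one_inv_le_one : (exp 1)⁻¹ ≤ 1 := inv_le_one_of_one_le₀ (one_le_exp zero_le_one)

lemma psi_eq_intervalIntegral (ξ : ℝ) : psi ξ = 2 * ∫ x in 0..(exp 1)⁻¹, psiIntegrand ξ x := by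
  rw [psi, intervalIntegral.integral_of_le (by positivity), integral_Ioc_eq_integral_Ioo]

theorem psi_pos {ξ : ℝ} (hξ : ξ ≠ 0) : 0 < psi ξ := by
  set a := min (exp 1)⁻¹ |ξ|⁻¹
  have ha : 0 < a := lt_min (by positivity) (by positivity)
  have hae : a ≤ (exp 1)⁻¹ := min_le_left _ _
  have hξa : |ξ| * a ≤ π :=
    calc |ξ| * a ≤ |ξ| * |ξ|⁻¹ := by gcongr; exact min_le_right _ _
      _ = 1 := mul_inv_cancel₀ (abs_pos.2 hξ).ne'
      _ ≤ π := by linarith [pi_gt_three]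
  have hlog : 0 < log (1 / a) :=
    log_pos (one_lt_one_div ha
      (hae.trans_lt (inv_lt_one_of_one_lt₀ (one_lt_exp_iff.2 one_pos))))
  have hlower := integral_psiIntegrand_zero_ge ha (hae.trans exp_one_inv_le_one) hξa
  have hmono := integral_psiIntegrand_mono_interval ξ le_rfl le_rfl ha.le hae exp_one_inv_le_one
  rw [psi_eq_intervalIntegral]
  have : 0 < ξ ^ 2 * a ^ 2 / π ^ 2 * log (1 / a) := by positivity
  linarith

theorem mul_log_le_psi {ξ : ℝ} (hξ : exp 1 ≤ ξ) : 2 / π ^ 2 * log ξ ≤ psi ξ := by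
  have hξ0 : 0 < ξ := (exp_pos 1).trans_le hξ
  have hinv : ξ⁻¹ ≤ (exp 1)⁻¹ := inv_anti₀ (exp_pos 1) hξ
  have hlower := integral_psiIntegrand_zero_ge (inv_pos.2 hξ0) (hinv.trans exp_one_inv_le_one)
    (by rw [abs_of_pos hξ0, mul_inv_cancel₀ hξ0.ne']; linarith [pi_gt_three])
  have hmono := integral_psiIntegrand_mono_interval ξ le_rfl le_rfl (inv_pos.2 hξ0).le hinv
    exp_one_inv_le_one
  rw [one_div, inv_inv, inv_pow, mul_inv_cancel₀ (by positivity)] at hlower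
  rw [psi_eq_intervalIntegral]
  linarith [show 2 / π ^ 2 * log ξ = 2 * (1 / π ^ 2 * log ξ) by ring]

theorem sq_log_sub_log_pi_sub_one_le_psi {ξ : ℝ} (hξ : π * exp 1 ≤ ξ) :
    (log ξ - log π) ^ 2 - 1 ≤ psi ξ := by
  have hξ0 : 0 < ξ := (by positivity : 0 < π * exp 1).trans_le hξ
  have hh : π / ξ ≤ (exp 1)⁻¹ := by
    rw [div_le_iff₀ hξ0, ← div_eq_inv_mul, le_div_iff₀ (exp_pos 1)]
    exact hξ
  have hpair := integral_levyDensity_le_integral_psiIntegrand hξ0 hh exp_one_inv_le_one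
  rw [integral_levyDensity (by positivity) (by positivity), log_div pi_pos.ne' hξ0.ne', log_inv,
    log_exp] at hpair
  rw [psi_eq_intervalIntegral]
  nlinarith

theorem psi_le_two_mul_sq_log_add_log {ξ : ℝ} (hξ : exp 1 ≤ ξ) :
    psi ξ ≤ 2 * log ξ ^ 2 + log ξ - 1 := by
  have hξ0 : 0 < ξ := (exp_pos 1).trans_le hξ
  have hinv : ξ⁻¹ ≤ (exp 1)⁻¹ := inv_anti₀ (exp_pos 1) hξ
  have hnear := integral_psiIntegrand_zero_le ξ (inv_pos.2 hξ0) (hinv.trans exp_one_inv_le_one)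
  have hfar := integral_psiIntegrand_le_sq_log ξ (inv_pos.2 hξ0) hinv exp_one_inv_le_one
  rw [one_div, inv_inv] at hnear
  rw [log_inv, log_inv, log_exp] at hfar
  rw [psi_eq_intervalIntegral, ← intervalIntegral.integral_add_adjacent_intervals
    (intervalIntegrable_psiIntegrand ξ le_rfl (inv_pos.2 hξ0).le (hinv.trans exp_one_inv_le_one))
    (intervalIntegrable_psiIntegrand ξ (inv_pos.2 hξ0).le hinv exp_one_inv_le_one)]
  have : ξ ^ 2 * ξ⁻¹ * (ξ⁻¹ * log ξ + ξ⁻¹) / 2 = (log ξ + 1) / 2 := by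
    field_simp
  nlinarith

lemma pi_le_exp_two : π ≤ exp 2 := by
  linarith [pi_lt_d2, quadratic_le_exp_of_nonneg zero_le_two]

theorem one_div_mul_sq_log_le_psi {ξ : ℝ} (hξ : exp 2 ≤ ξ) :
    1 / (2 * π ^ 2) * log ξ ^ 2 ≤ psi ξ := by
  have hξ0 : 0 < ξ := (exp_pos 2).trans_le hξ
  have hL : 2 ≤ log ξ := (le_log_iff_exp_le hξ0).2 hξ
  rcases le_total (log ξ) 4 with hL4 | hL4
  · calc 1 / (2 * π ^ 2) * log ξ ^ 2 ≤ 1 / (2 * π ^ 2) * (4 * log ξ) := by gcongr; nlinarith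
      _ = 2 / π ^ 2 * log ξ := by field_simp; ring
      _ ≤ psi ξ := mul_log_le_psi ((exp_le_exp.2 one_le_two).trans hξ)
  · have hπξ : π * exp 1 ≤ ξ :=
      calc π * exp 1 ≤ exp 2 * exp 1 := by gcongr; exact pi_le_exp_two
        _ = exp 3 := by rw [← exp_add]; norm_num
        _ ≤ exp (log ξ) := exp_le_exp.2 (by linarith)
        _ = ξ := exp_log hξ0
    have hlogπ : log π ≤ 2 := (log_le_iff_le_exp pi_pos).2 pi_le_exp_two
    have hπ : 9 ≤ π ^ 2 := by nlinarith [pi_gt_three]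
    calc 1 / (2 * π ^ 2) * log ξ ^ 2 ≤ 1 / 18 * log ξ ^ 2 := by gcongr; linarith
      _ ≤ (log ξ - log π) ^ 2 - 1 := by
          nlinarith [mul_self_le_mul_self (by linarith : (0 : ℝ) ≤ log ξ - 2)
            (by linarith : log ξ - 2 ≤ log ξ - log π)]
      _ ≤ psi ξ := sq_log_sub_log_pi_sub_one_le_psi hπξ

theorem psi_le_three_mul_sq_log {ξ : ℝ} (hξ : exp 1 ≤ ξ) : psi ξ ≤ 3 * log ξ ^ 2 := by
  nlinarith [psi_le_two_mul_sq_log_add_log hξ, sq_nonneg (log ξ - 1 / 2)]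

end LogLevy

open LogLevy

/-- The characteristic exponent `ψ(ξ) = 2∫₀^{1/e} (1-cos(ξx)) log(1/x) x⁻¹ dx`
is strictly positive off the origin and grows like `(log ξ)²`. -/
theorem stmt_18 :
    (∀ ξ : ℝ, ξ ≠ 0 →
      0 < 2 * ∫ x in Ioo (0 : ℝ) (Real.exp 1)⁻¹,
        (1 - Real.cos (ξ * x)) * Real.log (1 / x) / x) ∧
    ∃ c₁ c₂ : ℝ, 0 < c₁ ∧ c₁ ≤ c₂ ∧ ∀ ξ : ℝ, Real.exp 2 ≤ ξ →
      c₁ * Real.log ξ ^ 2 ≤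
          (2 * ∫ x in Ioo (0 : ℝ) (Real.exp 1)⁻¹,
            (1 - Real.cos (ξ * x)) * Real.log (1 / x) / x) ∧
        (2 * ∫ x in Ioo (0 : ℝ) (Real.exp 1)⁻¹,
            (1 - Real.cos (ξ * x)) * Real.log (1 / x) / x) ≤
          c₂ * Real.log ξ ^ 2 := by
  have hpsi (ξ : ℝ) : 2 * ∫ x in Ioo (0 : ℝ) (exp 1)⁻¹,
      (1 - cos (ξ * x)) * log (1 / x) / x = psi ξ := by
    simp only [psi, psiIntegrand, levyDensity, mul_div_assoc]
  simp only [hpsi]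
  refine ⟨fun ξ hξ => psi_pos hξ, 1 / (2 * π ^ 2), 3, by positivity, ?_, fun ξ hξ =>
    ⟨one_div_mul_sq_log_le_psi hξ,
      psi_le_three_mul_sq_log ((exp_le_exp.2 one_le_two).trans hξ)⟩⟩
  rw [div_le_iff₀ (by positivity)]
  nlinarith [pi_gt_three]
end
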